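/- arXiv:1112.0352 — 7 statements merged into one kernel-verified Lean document; each statement's English description precedes it below -/
import Mathlib

section
/- Let A' → A be a small surjection in C with kernel I, and identify Γ_{A',A} with Der ⊗_k I via the isomorphism m(d ⊗ ε)(x) = x + ε·d(x̄). If γ = m(d ⊗ ε) ∈ Γ_{A',A} and γ_g ∈ Γ_{A'} is any element whose coefficientwise reduction modulo m_{A'} equals ρ(g), then γ_g ∘ γ ∘ γ_g^{-1} = m((ρ(g) ∘ d ∘ ρ(g)^{-1}) ⊗ ε); in particular, every element of Γ_{A',k} := ker(Γ_{A'} → Aut_k(k[[t]])) commutes with every element of Γ_{A',A}. -/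
open PowerSeries

/-!
Conjugation: `γ_g⁻¹` carries `x` and a lift `y` of `ρ(g) d ρ(g)⁻¹ (x̄)` to `x'` and a lift `y'`
of `d(x̄')`; then `γ x' = x' + ε y'`, and applying the `A'`-linear `γ_g` gives `x + ε y`.

Commutation: an automorphism that is the identity modulo an ideal `J` of the noetherian ring `A'`
moves every series by an element of `J • A'[[t]]` (coefficientwise membership suffices because
`J` is finitely generated). If `δ` is trivial modulo `m_{A'}` and `σ` modulo `I`, then, since
`m_{A'} I = 0`, linearity gives `δ = id` on `I • A'[[t]]` and `σ = id` on `m_{A'} • A'[[t]]`,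
whence `δ (σ x) = δ x + (σ x - x) = σ (δ x)`.
-/

namespace LinearMap

variable {R M : Type*} [CommRing R] [AddCommGroup M] [Module R M]

theorem apply_eq_self_of_mem_smul_top {I J : Ideal R} (hIJ : I * J = ⊥) (f : M →ₗ[R] M)
    (hf : ∀ x, f x - x ∈ J • (⊤ : Submodule R M)) {u : M} (hu : u ∈ I • (⊤ : Submodule R M)) :
    f u = u := by
  refine Submodule.smul_induction_on hu (fun a ha v _ => ?_) fun u v hu hv => by
    rw [map_add, hu, hv]
  have hmem : a • (f v - v) ∈ (I * J) • (⊤ : Submodule R M) := by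
    rw [Submodule.mul_smul]
    exact Submodule.smul_mem_smul ha (hf v)
  rw [hIJ, Submodule.bot_smul, Submodule.mem_bot, smul_sub, sub_eq_zero] at hmem
  rw [map_smul, hmem]

theorem apply_apply_comm_of_sub_mem_smul_top {I J : Ideal R} (hIJ : I * J = ⊥)
    (δ σ : M →ₗ[R] M) (hδ : ∀ x, δ x - x ∈ I • (⊤ : Submodule R M))
    (hσ : ∀ x, σ x - x ∈ J • (⊤ : Submodule R M)) (x : M) : δ (σ x) = σ (δ x) := by
  have hδσ : δ (σ x - x) = σ x - x :=
    δ.apply_eq_self_of_mem_smul_top (by rw [mul_comm, hIJ]) hδ (hσ x)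
  have hσδ : σ (δ x - x) = δ x - x := σ.apply_eq_self_of_mem_smul_top hIJ hσ (hδ x)
  calc δ (σ x) = δ x + δ (σ x - x) := by rw [← map_add, add_sub_cancel]
    _ = σ x + σ (δ x - x) := by rw [hδσ, hσδ]; abel
    _ = σ (δ x) := by rw [← map_add, add_sub_cancel]

end LinearMap

namespace PowerSeries

variable {R : Type*} [CommRing R]

theorem mem_smul_top_of_coeff_mem {I : Ideal R} (hI : I.FG) {u : R⟦X⟧}
    (hu : ∀ n, coeff n u ∈ I) : u ∈ I • (⊤ : Submodule R R⟦X⟧) := by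
  obtain ⟨s, rfl⟩ := hI
  choose c _ hc using fun n => Submodule.mem_span_finset.mp (hu n)
  have hsum : u = ∑ a ∈ s, a • mk (fun n => c n a) := by
    ext n
    simp only [map_sum, coeff_smul, coeff_mk, smul_eq_mul, ← hc n, mul_comm]
  rw [hsum]
  exact Submodule.sum_mem _ fun a ha =>
    Submodule.smul_mem_smul (Submodule.subset_span ha) Submodule.mem_top

theorem sub_mem_ker_smul_top_of_map_eq {S : Type*} [CommRing S] (f : R →+* S)
    (hf : (RingHom.ker f).FG) {a b : R⟦X⟧} (h : map f a = map f b) :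
    a - b ∈ RingHom.ker f • (⊤ : Submodule R R⟦X⟧) :=
  mem_smul_top_of_coeff_mem hf fun n => by
    rw [RingHom.mem_ker, ← coeff_map, map_sub, h, sub_self, map_zero]

theorem conj_apply_eq_add_C_mul_of_lift {k : Type*} [CommRing k] (res : R →+* k)
    (D : k⟦X⟧ → k⟦X⟧) (ε : R) (γ γg : R⟦X⟧ ≃ₐ[R] R⟦X⟧) (φ : k⟦X⟧ ≃ k⟦X⟧)
    (hγ : ∀ x y, map res y = D (map res x) → γ x = x + C ε * y)
    (hγg : ∀ x, map res (γg x) = φ (map res x)) (x y : R⟦X⟧)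
    (hy : map res y = φ (D (φ.symm (map res x)))) :
    γg (γ (γg.symm x)) = x + C ε * y := by
  have hγg_symm (z : R⟦X⟧) : map res (γg.symm z) = φ.symm (map res z) := by
    rw [φ.eq_symm_apply, ← hγg, γg.apply_symm_apply]
  have hγx : γ (γg.symm x) = γg.symm x + C ε * γg.symm y := by
    refine hγ _ _ ?_
    rw [hγg_symm, hγg_symm, hy, φ.symm_apply_apply]
  rw [hγx, map_add, ← smul_eq_C_mul, map_smul, smul_eq_C_mul, γg.apply_symm_apply,
    γg.apply_symm_apply]

end PowerSeries

theorem statement1_general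
    (k : Type) [Field k]
    (G : Type) [Group G]
    (ρ : G →* (PowerSeries k ≃ₐ[k] PowerSeries k))
    (A' A : Type) [CommRing A'] [CommRing A]
    [IsLocalRing A'] [IsArtinianRing A']
    (resA' : A' →+* k)
    (π : A' →+* A)
    (hsmall : ∀ a ∈ IsLocalRing.maximalIdeal A', ∀ x ∈ RingHom.ker π, a * x = 0)
    -- the data `d ⊗ ε` and the automorphism `γ = m(d ⊗ ε)`
    (d : Derivation k (PowerSeries k) (PowerSeries k)) (ε : A')
    (γ : PowerSeries A' ≃ₐ[A'] PowerSeries A')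
    (hγ : ∀ x y : PowerSeries A',
      PowerSeries.map resA' y = d (PowerSeries.map resA' x) →
      γ x = x + PowerSeries.C ε * y)
    -- `γ_g`, an arbitrary lift of `ρ(g)`
    (g : G) (γg : PowerSeries A' ≃ₐ[A'] PowerSeries A')
    (hγg : ∀ x, PowerSeries.map resA' (γg x) = ρ g (PowerSeries.map resA' x)) :
    -- conjugation: `γ_g ∘ γ ∘ γ_g⁻¹ = m((ρ(g) ∘ d ∘ ρ(g)⁻¹) ⊗ ε)`
    (∀ x y : PowerSeries A',
      PowerSeries.map resA' y = ρ g (d (ρ g⁻¹ (PowerSeries.map resA' x))) →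
      γg (γ (γg⁻¹ x)) = x + PowerSeries.C ε * y) ∧
    -- in particular, `Γ_{A',k}` and `Γ_{A',A}` commute element-wise
    (∀ δ σ : PowerSeries A' ≃ₐ[A'] PowerSeries A',
      (∀ x, PowerSeries.map resA' (δ x) = PowerSeries.map resA' x) →
      (∀ x, PowerSeries.map π (σ x) = PowerSeries.map π x) →
      ∀ x, δ (σ x) = σ (δ x)) := by
  constructor
  · intro x y hy
    rw [map_inv, AlgEquiv.aut_inv] at hy
    exact conj_apply_eq_add_C_mul_of_lift resA' d ε γ γg (ρ g).toEquiv hγ hγg x y hy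
  · intro δ σ hδ hσ x
    have hkerπ : RingHom.ker resA' * RingHom.ker π = ⊥ := by
      refine le_bot_iff.mp (Ideal.mul_le.mpr fun a ha b hb => ?_)
      exact hsmall a (IsLocalRing.le_maximalIdeal (RingHom.ker_ne_top resA') ha) b hb
    exact LinearMap.apply_apply_comm_of_sub_mem_smul_top hkerπ δ.toLinearMap σ.toLinearMap
      (fun x => sub_mem_ker_smul_top_of_map_eq resA' (Ideal.fg_of_isNoetherianRing _) (hδ x))
      (fun x => sub_mem_ker_smul_top_of_map_eq π (Ideal.fg_of_isNoetherianRing _) (hσ x)) x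

/-- Let `A' → A` be a small surjection in `C` with kernel `I`.  If
`γ ∈ Γ_{A',A}` is the automorphism `m(d ⊗ ε)`, i.e. `γ(x) = x + ε·d(x̄)` (expressed by
quantifying over coefficientwise lifts `y` of `d(x̄)`), and `γ_g ∈ Γ_{A'}` is any element
whose coefficientwise reduction modulo `m_{A'}` equals `ρ(g)`, then
`γ_g ∘ γ ∘ γ_g⁻¹ = m((ρ(g) ∘ d ∘ ρ(g)⁻¹) ⊗ ε)`; in particular every element of
`Γ_{A',k} = ker(Γ_{A'} → Aut_k(k[[t]]))` commutes with every element of `Γ_{A',A}`. -/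
theorem statement1
    (p : ℕ) [Fact p.Prime]
    (k : Type) [Field k] [CharP k p] [PerfectField k]
    (G : Type) [Group G] [Finite G]
    (ρ : G →* (PowerSeries k ≃ₐ[k] PowerSeries k)) (hρ : Function.Injective ρ)
    (A' A : Type) [CommRing A'] [CommRing A]
    [Algebra (WittVector p k) A'] [Algebra (WittVector p k) A]
    [IsLocalRing A'] [IsLocalRing A] [IsArtinianRing A'] [IsArtinianRing A]
    (resA' : A' →+* k) (hres'surj : Function.Surjective resA')
    (hres'ker : RingHom.ker resA' = IsLocalRing.maximalIdeal A')
    (resA : A →+* k) (hressurj : Function.Surjective resA)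
    (hresker : RingHom.ker resA = IsLocalRing.maximalIdeal A)
    (π : A' →+* A) (hπ : Function.Surjective π) (hπres : resA.comp π = resA')
    (hsmall : ∀ a ∈ IsLocalRing.maximalIdeal A', ∀ x ∈ RingHom.ker π, a * x = 0)
    -- the data `d ⊗ ε` and the automorphism `γ = m(d ⊗ ε)`
    (d : Derivation k (PowerSeries k) (PowerSeries k)) (ε : A') (hε : ε ∈ RingHom.ker π)
    (γ : PowerSeries A' ≃ₐ[A'] PowerSeries A')
    (hγ : ∀ x y : PowerSeries A',
      PowerSeries.map resA' y = d (PowerSeries.map resA' x) →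
      γ x = x + PowerSeries.C ε * y)
    -- `γ_g`, an arbitrary lift of `ρ(g)`
    (g : G) (γg : PowerSeries A' ≃ₐ[A'] PowerSeries A')
    (hγg : ∀ x, PowerSeries.map resA' (γg x) = ρ g (PowerSeries.map resA' x)) :
    -- conjugation: `γ_g ∘ γ ∘ γ_g⁻¹ = m((ρ(g) ∘ d ∘ ρ(g)⁻¹) ⊗ ε)`
    (∀ x y : PowerSeries A',
      PowerSeries.map resA' y = ρ g (d (ρ g⁻¹ (PowerSeries.map resA' x))) →
      γg (γ (γg⁻¹ x)) = x + PowerSeries.C ε * y) ∧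
    -- in particular, `Γ_{A',k}` and `Γ_{A',A}` commute element-wise
    (∀ δ σ : PowerSeries A' ≃ₐ[A'] PowerSeries A',
      (∀ x, PowerSeries.map resA' (δ x) = PowerSeries.map resA' x) →
      (∀ x, PowerSeries.map π (σ x) = PowerSeries.map π x) →
      ∀ x, δ (σ x) = σ (δ x)) :=
  statement1_general k G ρ A' A resA' π hsmall d ε γ hγ g γg hγg
end

section
/- For a map γ : G → Der define ρ_γ(g) ∈ Aut_{k[ε]}(k[ε][[t]]) by ρ_γ(g)(x₀ + εx₁) = ρ(g)(x₀) + ε(ρ(g)(x₁) + γ_g(ρ(g)(x₀))) for x₀, x₁ ∈ k[[t]]. Then: (a) g ↦ ρ_γ(g) is a lift of ρ to k[ε] if and only if γ is a 1-cocycle, i.e. γ_{gh} = γ_g + g·γ_h for all g, h ∈ G; (b) two 1-cocycles γ, γ' yield equivalent lifts if and only if γ − γ' is a coboundary, i.e. there is δ ∈ Der with γ_g − γ'_g = g·δ − δ for all g; (c) every lift of ρ to k[ε] is equivalent to ρ_γ for some 1-cocycle γ. Hence [γ] ↦ [ρ_γ] is a bijection from H^1(G, Der) onto the set of equivalence classes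 of lifts of ρ to k[ε]. -/
open PowerSeries

/-- coefficientwise inclusion `k[[t]] → k[ε][[t]]`. -/
noncomputable def inclEps (k : Type) [Field k] :
    PowerSeries k →+* PowerSeries (DualNumber k) :=
  PowerSeries.map (algebraMap k (DualNumber k))

/-- coefficientwise reduction `k[ε][[t]] → k[[t]]` modulo `(ε)`. -/
noncomputable def redEps (k : Type) [Field k] :
    PowerSeries (DualNumber k) →+* PowerSeries k :=
  PowerSeries.map (TrivSqZeroExt.fstHom k k k).toRingHom

/-- the constant power series `ε ∈ k[ε][[t]]`. -/
noncomputable def epsC (k : Type) [Field k] : PowerSeries (DualNumber k) :=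
  PowerSeries.C (R := DualNumber k) DualNumber.eps

/-- `P : G → Aut_{k[ε]}(k[ε][[t]])` is given by the formula
`ρ_γ(g)(x₀ + εx₁) = ρ(g)(x₀) + ε(ρ(g)(x₁) + γ_g(ρ(g)(x₀)))`. -/
def IsTwistLift {k : Type} [Field k] {G : Type} [Group G]
    (ρ : G →* (PowerSeries k ≃ₐ[k] PowerSeries k))
    (γ : G → Derivation k (PowerSeries k) (PowerSeries k))
    (P : G → (PowerSeries (DualNumber k) ≃ₐ[DualNumber k] PowerSeries (DualNumber k))) :
    Prop :=
  ∀ (g : G) (x₀ x₁ : PowerSeries k),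
    P g (inclEps k x₀ + epsC k * inclEps k x₁) =
      inclEps k (ρ g x₀) + epsC k * inclEps k (ρ g x₁ + γ g (ρ g x₀))

/-!
Write elements of `k[ε][[t]]` as `x₀ + εx₁`. A `k[ε]`-algebra automorphism reducing to `σ` is
exactly `twist σ D : x₀ + εx₁ ↦ σ x₀ + ε(σ x₁ + D (σ x₀))` for a unique derivation `D`, namely
the `ε`-part of the image of `σ⁻¹ x`. Twists multiply like a semidirect product,
`twist σ D * twist τ E = twist (στ) (D + σ E σ⁻¹)`, so `g ↦ twist (ρ g) (γ g)` is multiplicative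
iff `γ` is a cocycle, and conjugating by `twist 1 (-δ)` changes `γ` by the coboundary of `δ`.
-/

namespace Derivation

variable {R A : Type*} [CommRing R] [CommRing A] [Algebra R A]

def conj (σ : A ≃ₐ[R] A) (D : Derivation R A A) : Derivation R A A :=
  Derivation.mk' ((σ : A →ₗ[R] A) ∘ₗ (D : A →ₗ[R] A) ∘ₗ (σ.symm : A →ₗ[R] A)) fun a b => by
    simp [D.leibniz]

@[simp]
lemma conj_apply (σ : A ≃ₐ[R] A) (D : Derivation R A A) (x : A) :
    D.conj σ x = σ (D (σ.symm x)) := rfl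

@[simp]
lemma conj_one (D : Derivation R A A) : D.conj 1 = D := rfl

@[simp]
lemma conj_neg (σ : A ≃ₐ[R] A) (D : Derivation R A A) : (-D).conj σ = -D.conj σ := by
  ext x; simp

end Derivation

section DualPowerSeries

variable {k : Type} [Field k]

noncomputable def dualMk (x₀ x₁ : PowerSeries k) : PowerSeries (DualNumber k) :=
  inclEps k x₀ + epsC k * inclEps k x₁

noncomputable def epsPart (y : PowerSeries (DualNumber k)) : PowerSeries k :=
  PowerSeries.mk fun n => (coeff n y).snd

@[simp]
lemma fst_coeff_dualMk (n : ℕ) (x₀ x₁ : PowerSeries k) :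
    (coeff n (dualMk x₀ x₁)).fst = coeff n x₀ := by
  simp [dualMk, inclEps, epsC, coeff_C_mul, TrivSqZeroExt.algebraMap_eq_inl']

@[simp]
lemma snd_coeff_dualMk (n : ℕ) (x₀ x₁ : PowerSeries k) :
    (coeff n (dualMk x₀ x₁)).snd = coeff n x₁ := by
  simp [dualMk, inclEps, epsC, coeff_C_mul, TrivSqZeroExt.algebraMap_eq_inl']

@[simp]
lemma redEps_dualMk (x₀ x₁ : PowerSeries k) : redEps k (dualMk x₀ x₁) = x₀ := by
  ext n; simp [redEps]

@[simp]
lemma epsPart_dualMk (x₀ x₁ : PowerSeries k) : epsPart (dualMk x₀ x₁) = x₁ := by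
  ext n; simp [epsPart]

@[simp]
lemma dualMk_redEps_epsPart (y : PowerSeries (DualNumber k)) :
    dualMk (redEps k y) (epsPart y) = y := by
  ext n <;> simp [redEps, epsPart]

lemma dualMk_surjective (y : PowerSeries (DualNumber k)) : ∃ x₀ x₁, dualMk x₀ x₁ = y :=
  ⟨_, _, dualMk_redEps_epsPart y⟩

@[simp]
lemma dualMk_inj {x₀ x₁ y₀ y₁ : PowerSeries k} :
    dualMk x₀ x₁ = dualMk y₀ y₁ ↔ x₀ = y₀ ∧ x₁ = y₁ := by
  refine ⟨fun h => ⟨?_, ?_⟩, fun h => h.1 ▸ h.2 ▸ rfl⟩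
  · simpa using congrArg (redEps k) h
  · simpa using congrArg epsPart h

lemma inclEps_eq_dualMk (x : PowerSeries k) : inclEps k x = dualMk x 0 := by
  simp [dualMk]

@[simp]
lemma epsPart_add (y z : PowerSeries (DualNumber k)) : epsPart (y + z) = epsPart y + epsPart z := by
  ext n; simp [epsPart]

@[simp]
lemma epsPart_zero : epsPart (0 : PowerSeries (DualNumber k)) = 0 := by
  ext n; simp [epsPart]

@[simp]
lemma dualMk_zero : dualMk 0 0 = (0 : PowerSeries (DualNumber k)) := by
  simp [dualMk]

lemma dualMk_one : dualMk 1 0 = (1 : PowerSeries (DualNumber k)) := by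
  simp [dualMk]

@[simp]
lemma epsPart_one : epsPart (1 : PowerSeries (DualNumber k)) = 0 := by
  rw [← dualMk_one, epsPart_dualMk]

lemma dualMk_add (x₀ x₁ y₀ y₁ : PowerSeries k) :
    dualMk x₀ x₁ + dualMk y₀ y₁ = dualMk (x₀ + y₀) (x₁ + y₁) := by
  simp only [dualMk, map_add]; ring

lemma dualMk_mul (x₀ x₁ y₀ y₁ : PowerSeries k) :
    dualMk x₀ x₁ * dualMk y₀ y₁ = dualMk (x₀ * y₀) (x₀ * y₁ + y₀ * x₁) := by
  have hε : epsC k * epsC k = 0 := by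
    rw [epsC, ← map_mul, DualNumber.eps_mul_eps, map_zero]
  simp only [dualMk, map_add, map_mul]
  linear_combination (inclEps k x₁ * inclEps k y₁) * hε

lemma epsC_mul_dualMk (x₀ x₁ : PowerSeries k) : epsC k * dualMk x₀ x₁ = dualMk 0 x₀ := by
  have : epsC k = dualMk 0 1 := by simp [dualMk]
  rw [this, dualMk_mul]
  simp

lemma algebraMap_eq_dualMk (c : DualNumber k) :
    algebraMap (DualNumber k) (PowerSeries (DualNumber k)) c = dualMk (C c.fst) (C c.snd) := by
  rw [← C_eq_algebraMap]
  ext n <;> simp only [fst_coeff_dualMk, snd_coeff_dualMk, coeff_C] <;> split_ifs <;> rfl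

end DualPowerSeries

section Twist

variable {k : Type} [Field k] (σ : PowerSeries k ≃ₐ[k] PowerSeries k)
  (D : Derivation k (PowerSeries k) (PowerSeries k))

noncomputable def twistHom :
    PowerSeries (DualNumber k) →ₐ[DualNumber k] PowerSeries (DualNumber k) where
  toFun y := dualMk (σ (redEps k y)) (σ (epsPart y) + D (σ (redEps k y)))
  map_one' := by simp [dualMk_one]
  map_mul' x y := by
    obtain ⟨x₀, x₁, rfl⟩ := dualMk_surjective x
    obtain ⟨y₀, y₁, rfl⟩ := dualMk_surjective y
    simp only [dualMk_mul, redEps_dualMk, epsPart_dualMk, map_mul, map_add, D.leibniz,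
      smul_eq_mul, dualMk_inj, true_and]
    ring
  map_zero' := by simp
  map_add' x y := by simp [dualMk_add, add_add_add_comm]
  commutes' c := by
    simp only [algebraMap_eq_dualMk, redEps_dualMk, epsPart_dualMk, C_eq_algebraMap,
      AlgEquiv.commutes, D.map_algebraMap, add_zero]

@[simp]
lemma twistHom_dualMk (x₀ x₁ : PowerSeries k) :
    twistHom σ D (dualMk x₀ x₁) = dualMk (σ x₀) (σ x₁ + D (σ x₀)) := by
  simp [twistHom]

noncomputable def twist :
    PowerSeries (DualNumber k) ≃ₐ[DualNumber k] PowerSeries (DualNumber k) :=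
  AlgEquiv.ofAlgHom (twistHom σ D) (twistHom σ.symm (-D.conj σ.symm))
    (AlgHom.ext fun y => by obtain ⟨x₀, x₁, rfl⟩ := dualMk_surjective y; simp)
    (AlgHom.ext fun y => by obtain ⟨x₀, x₁, rfl⟩ := dualMk_surjective y; simp)

@[simp]
lemma twist_dualMk (x₀ x₁ : PowerSeries k) :
    twist σ D (dualMk x₀ x₁) = dualMk (σ x₀) (σ x₁ + D (σ x₀)) :=
  twistHom_dualMk σ D x₀ x₁

lemma redEps_twist (y : PowerSeries (DualNumber k)) :
    redEps k (twist σ D y) = σ (redEps k y) := by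
  obtain ⟨x₀, x₁, rfl⟩ := dualMk_surjective y
  simp

lemma twist_mul_twist (τ : PowerSeries k ≃ₐ[k] PowerSeries k)
    (E : Derivation k (PowerSeries k) (PowerSeries k)) :
    twist σ D * twist τ E = twist (σ * τ) (D + E.conj σ) := by
  ext1 y
  obtain ⟨x₀, x₁, rfl⟩ := dualMk_surjective y
  simp only [AlgEquiv.mul_apply, twist_dualMk, map_add, Derivation.add_apply,
    Derivation.conj_apply, AlgEquiv.symm_apply_apply, dualMk_inj, true_and]
  ring

lemma twist_inj {E : Derivation k (PowerSeries k) (PowerSeries k)} :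
    twist σ D = twist σ E ↔ D = E := by
  refine ⟨fun h => Derivation.ext fun x => ?_, fun h => h ▸ rfl⟩
  simpa using congrArg (fun χ => epsPart (χ (dualMk (σ.symm x) 0))) h

lemma twist_eq_conj_iff (E d : Derivation k (PowerSeries k) (PowerSeries k)) :
    twist σ D = twist 1 (-d) * twist σ E * (twist 1 (-d))⁻¹ ↔ D - E = d.conj σ - d := by
  rw [_root_.eq_mul_inv_iff_mul_eq, twist_mul_twist, twist_mul_twist, mul_one, one_mul, twist_inj,
    Derivation.conj_one, Derivation.conj_neg]
  constructor <;> intro h <;> rw [← sub_eq_zero] at h ⊢ <;> rw [← h] <;> abel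

end Twist

section Extraction

variable {k : Type} [Field k]

lemma inclEps_algebraMap (a : k) :
    inclEps k (algebraMap k (PowerSeries k) a) =
      algebraMap (DualNumber k) (PowerSeries (DualNumber k)) (algebraMap k (DualNumber k) a) := by
  simp [inclEps]

variable (F : PowerSeries (DualNumber k) →ₐ[DualNumber k] PowerSeries (DualNumber k))
  {σ : PowerSeries k ≃ₐ[k] PowerSeries k} (hF : ∀ y, redEps k (F y) = σ (redEps k y))
include hF

lemma apply_inclEps_eq_dualMk (u : PowerSeries k) :
    F (inclEps k u) = dualMk (σ u) (epsPart (F (inclEps k u))) := by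
  conv_lhs => rw [← dualMk_redEps_epsPart (F (inclEps k u))]
  rw [hF, inclEps_eq_dualMk, redEps_dualMk]

lemma epsPart_apply_inclEps_mul (u v : PowerSeries k) :
    epsPart (F (inclEps k (u * v))) =
      σ u * epsPart (F (inclEps k v)) + σ v * epsPart (F (inclEps k u)) := by
  conv_lhs => rw [map_mul, map_mul, apply_inclEps_eq_dualMk F hF u,
    apply_inclEps_eq_dualMk F hF v, dualMk_mul, epsPart_dualMk]

noncomputable def derivationOfLift : Derivation k (PowerSeries k) (PowerSeries k) where
  toFun x := epsPart (F (inclEps k (σ.symm x)))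
  map_add' x y := by simp
  map_smul' a x := by
    rw [Algebra.smul_def, map_mul, AlgEquiv.commutes, epsPart_apply_inclEps_mul F hF,
      inclEps_algebraMap, AlgHom.commutes, algebraMap_eq_dualMk, epsPart_dualMk, AlgEquiv.commutes]
    simp [Algebra.smul_def, TrivSqZeroExt.algebraMap_eq_inl']
  map_one_eq_zero' := by simp
  leibniz' u v := by
    change epsPart (F (inclEps k (σ.symm (u * v)))) =
      u * epsPart (F (inclEps k (σ.symm v))) + v * epsPart (F (inclEps k (σ.symm u)))
    rw [map_mul, epsPart_apply_inclEps_mul F hF, AlgEquiv.apply_symm_apply,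
      AlgEquiv.apply_symm_apply]

lemma apply_dualMk_eq_twist (x₀ x₁ : PowerSeries k) :
    F (dualMk x₀ x₁) = twist σ (derivationOfLift F hF) (dualMk x₀ x₁) := by
  have hε : ∀ y, F (epsC k * y) = epsC k * F y := fun y => by
    rw [epsC, C_eq_algebraMap, ← Algebra.smul_def, map_smul, Algebra.smul_def]
  rw [twist_dualMk, dualMk, map_add, hε, apply_inclEps_eq_dualMk F hF,
    apply_inclEps_eq_dualMk F hF x₁, epsC_mul_dualMk, dualMk_add]
  simp [derivationOfLift, add_comm]

end Extraction

lemma exists_twist_eq {k : Type} [Field k]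
    (F : PowerSeries (DualNumber k) ≃ₐ[DualNumber k] PowerSeries (DualNumber k))
    {σ : PowerSeries k ≃ₐ[k] PowerSeries k} (hF : ∀ y, redEps k (F y) = σ (redEps k y)) :
    ∃ D, twist σ D = F := by
  refine ⟨derivationOfLift F.toAlgHom hF, AlgEquiv.ext fun y => ?_⟩
  obtain ⟨x₀, x₁, rfl⟩ := dualMk_surjective y
  exact (apply_dualMk_eq_twist F.toAlgHom hF x₀ x₁).symm

section Lifts

variable {k : Type} [Field k] {G : Type} [Group G] {ρ : G →* (PowerSeries k ≃ₐ[k] PowerSeries k)}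

lemma isTwistLift_iff {γ : G → Derivation k (PowerSeries k) (PowerSeries k)}
    {P : G → (PowerSeries (DualNumber k) ≃ₐ[DualNumber k] PowerSeries (DualNumber k))} :
    IsTwistLift ρ γ P ↔ ∀ g, P g = twist (ρ g) (γ g) := by
  refine ⟨fun hP g => AlgEquiv.ext fun y => ?_, fun hP g x₀ x₁ => ?_⟩
  · obtain ⟨x₀, x₁, rfl⟩ := dualMk_surjective y
    exact (hP g x₀ x₁).trans (twist_dualMk _ _ x₀ x₁).symm
  · rw [hP g]
    exact twist_dualMk _ _ x₀ x₁

lemma cocycle_condition_iff (γ : G → Derivation k (PowerSeries k) (PowerSeries k)) :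
    (∀ g h x, γ (g * h) x = γ g x + ρ g (γ h (ρ g⁻¹ x))) ↔
      ∀ g h, γ (g * h) = γ g + (γ h).conj (ρ g) := by
  simp [Derivation.ext_iff, map_inv, AlgEquiv.aut_inv]

lemma coboundary_condition_iff (γ γ' : G → Derivation k (PowerSeries k) (PowerSeries k))
    (d : Derivation k (PowerSeries k) (PowerSeries k)) :
    (∀ g x, γ g x - γ' g x = ρ g (d (ρ g⁻¹ x)) - d x) ↔ ∀ g, γ g - γ' g = d.conj (ρ g) - d := by
  simp [Derivation.ext_iff, map_inv, AlgEquiv.aut_inv]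

lemma IsTwistLift.map_mul_iff {γ : G → Derivation k (PowerSeries k) (PowerSeries k)}
    {P : G → (PowerSeries (DualNumber k) ≃ₐ[DualNumber k] PowerSeries (DualNumber k))}
    (hP : IsTwistLift ρ γ P) :
    (∀ g h x, P (g * h) x = P g (P h x)) ↔ ∀ g h x, γ (g * h) x = γ g x + ρ g (γ h (ρ g⁻¹ x)) := by
  rw [isTwistLift_iff] at hP
  simp only [cocycle_condition_iff, ← AlgEquiv.mul_apply, ← AlgEquiv.ext_iff, hP, twist_mul_twist,
    map_mul, twist_inj]

lemma IsTwistLift.equivalent_iff {γ γ' : G → Derivation k (PowerSeries k) (PowerSeries k)}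
    {P P' : G → (PowerSeries (DualNumber k) ≃ₐ[DualNumber k] PowerSeries (DualNumber k))}
    (hP : IsTwistLift ρ γ P) (hP' : IsTwistLift ρ γ' P') :
    (∃ χ : PowerSeries (DualNumber k) ≃ₐ[DualNumber k] PowerSeries (DualNumber k),
        (∀ x, redEps k (χ x) = redEps k x) ∧ ∀ g x, P g x = χ (P' g (χ⁻¹ x))) ↔
      ∃ d : Derivation k (PowerSeries k) (PowerSeries k),
        ∀ g x, γ g x - γ' g x = ρ g (d (ρ g⁻¹ x)) - d x := by
  rw [isTwistLift_iff] at hP hP'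
  simp only [coboundary_condition_iff, ← twist_eq_conj_iff, ← hP, ← hP']
  constructor
  · rintro ⟨χ, hχ, hconj⟩
    obtain ⟨δ, rfl⟩ := exists_twist_eq χ (σ := 1) hχ
    exact ⟨-δ, fun g => by rw [neg_neg]; exact AlgEquiv.ext (hconj g)⟩
  · rintro ⟨d, hd⟩
    exact ⟨twist 1 (-d), fun y => redEps_twist 1 (-d) y, fun g x => by rw [hd g]; rfl⟩

lemma exists_isTwistLift_of_lift
    (L : G →* (PowerSeries (DualNumber k) ≃ₐ[DualNumber k] PowerSeries (DualNumber k)))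
    (hL : ∀ g x, redEps k (L g x) = ρ g (redEps k x)) :
    ∃ γ : G → Derivation k (PowerSeries k) (PowerSeries k), IsTwistLift ρ γ L := by
  choose γ hγ using fun g => exists_twist_eq (L g) (hL g)
  exact ⟨γ, isTwistLift_iff.2 fun g => (hγ g).symm⟩

end Lifts

theorem statement2_general
    (k : Type) [Field k]
    (G : Type) [Group G]
    (ρ : G →* (PowerSeries k ≃ₐ[k] PowerSeries k)) :
    -- (a)
    (∀ (γ : G → Derivation k (PowerSeries k) (PowerSeries k))
       (P : G → (PowerSeries (DualNumber k) ≃ₐ[DualNumber k] PowerSeries (DualNumber k))),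
      IsTwistLift ρ γ P →
      ((∀ g h x, P (g * h) x = P g (P h x)) ↔
        (∀ g h x, γ (g * h) x = γ g x + ρ g (γ h (ρ g⁻¹ x))))) ∧
    -- (b)
    (∀ (γ γ' : G → Derivation k (PowerSeries k) (PowerSeries k))
       (P P' : G → (PowerSeries (DualNumber k) ≃ₐ[DualNumber k] PowerSeries (DualNumber k))),
      IsTwistLift ρ γ P → IsTwistLift ρ γ' P' →
      (∀ g h x, γ (g * h) x = γ g x + ρ g (γ h (ρ g⁻¹ x))) →
      (∀ g h x, γ' (g * h) x = γ' g x + ρ g (γ' h (ρ g⁻¹ x))) →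
      ((∃ χ : PowerSeries (DualNumber k) ≃ₐ[DualNumber k] PowerSeries (DualNumber k),
          (∀ x, redEps k (χ x) = redEps k x) ∧
          ∀ g x, P g x = χ (P' g (χ⁻¹ x))) ↔
        (∃ δ : Derivation k (PowerSeries k) (PowerSeries k),
          ∀ g x, γ g x - γ' g x = ρ g (δ (ρ g⁻¹ x)) - δ x))) ∧
    -- (c)
    (∀ L : G →* (PowerSeries (DualNumber k) ≃ₐ[DualNumber k] PowerSeries (DualNumber k)),
      (∀ g x, redEps k (L g x) = ρ g (redEps k x)) →
      ∃ (γ : G → Derivation k (PowerSeries k) (PowerSeries k))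
        (P : G → (PowerSeries (DualNumber k) ≃ₐ[DualNumber k] PowerSeries (DualNumber k))),
        IsTwistLift ρ γ P ∧
        (∀ g h x, γ (g * h) x = γ g x + ρ g (γ h (ρ g⁻¹ x))) ∧
        ∃ χ : PowerSeries (DualNumber k) ≃ₐ[DualNumber k] PowerSeries (DualNumber k),
          (∀ x, redEps k (χ x) = redEps k x) ∧
          ∀ g x, L g x = χ (P g (χ⁻¹ x))) := by
  refine ⟨fun γ P hP => hP.map_mul_iff, fun γ γ' P P' hP hP' _ _ => hP.equivalent_iff hP',
    fun L hL => ?_⟩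
  obtain ⟨γ, hγ⟩ := exists_isTwistLift_of_lift L hL
  refine ⟨γ, L, hγ, hγ.map_mul_iff.1 fun g h x => by rw [map_mul, AlgEquiv.mul_apply],
    1, fun _ => rfl, fun _ _ => rfl⟩

/-- (a) `ρ_γ` is a lift of `ρ` to `k[ε]` iff `γ` is a `1`-cocycle;
(b) two `1`-cocycles yield equivalent lifts iff their difference is a coboundary;
(c) every lift of `ρ` to `k[ε]` is equivalent to some `ρ_γ` with `γ` a `1`-cocycle.
Hence `[γ] ↦ [ρ_γ]` is a bijection from `H¹(G, Der)` onto the set of equivalence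
classes of lifts of `ρ` to `k[ε]`. -/
theorem statement2
    (p : ℕ) [Fact p.Prime]
    (k : Type) [Field k] [CharP k p] [PerfectField k]
    (G : Type) [Group G] [Finite G]
    (ρ : G →* (PowerSeries k ≃ₐ[k] PowerSeries k)) (hρ : Function.Injective ρ) :
    -- (a)
    (∀ (γ : G → Derivation k (PowerSeries k) (PowerSeries k))
       (P : G → (PowerSeries (DualNumber k) ≃ₐ[DualNumber k] PowerSeries (DualNumber k))),
      IsTwistLift ρ γ P →
      ((∀ g h x, P (g * h) x = P g (P h x)) ↔
        (∀ g h x, γ (g * h) x = γ g x + ρ g (γ h (ρ g⁻¹ x))))) ∧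
    -- (b)
    (∀ (γ γ' : G → Derivation k (PowerSeries k) (PowerSeries k))
       (P P' : G → (PowerSeries (DualNumber k) ≃ₐ[DualNumber k] PowerSeries (DualNumber k))),
      IsTwistLift ρ γ P → IsTwistLift ρ γ' P' →
      (∀ g h x, γ (g * h) x = γ g x + ρ g (γ h (ρ g⁻¹ x))) →
      (∀ g h x, γ' (g * h) x = γ' g x + ρ g (γ' h (ρ g⁻¹ x))) →
      ((∃ χ : PowerSeries (DualNumber k) ≃ₐ[DualNumber k] PowerSeries (DualNumber k),
          (∀ x, redEps k (χ x) = redEps k x) ∧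
          ∀ g x, P g x = χ (P' g (χ⁻¹ x))) ↔
        (∃ δ : Derivation k (PowerSeries k) (PowerSeries k),
          ∀ g x, γ g x - γ' g x = ρ g (δ (ρ g⁻¹ x)) - δ x))) ∧
    -- (c)
    (∀ L : G →* (PowerSeries (DualNumber k) ≃ₐ[DualNumber k] PowerSeries (DualNumber k)),
      (∀ g x, redEps k (L g x) = ρ g (redEps k x)) →
      ∃ (γ : G → Derivation k (PowerSeries k) (PowerSeries k))
        (P : G → (PowerSeries (DualNumber k) ≃ₐ[DualNumber k] PowerSeries (DualNumber k))),
        IsTwistLift ρ γ P ∧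
        (∀ g h x, γ (g * h) x = γ g x + ρ g (γ h (ρ g⁻¹ x))) ∧
        ∃ χ : PowerSeries (DualNumber k) ≃ₐ[DualNumber k] PowerSeries (DualNumber k),
          (∀ x, redEps k (χ x) = redEps k x) ∧
          ∀ g x, L g x = χ (P g (χ⁻¹ x))) :=
  statement2_general k G ρ
end

section
/- Let A' → A be a small surjection in C with kernel I, and let ρ_A : G → Γ_A be a lift of ρ to A. Then: (a) there exists a set-theoretic map ρ* : G → Γ_{A'} with ρ*(1) = id whose composition with the reduction Γ_{A'} → Γ_A equals ρ_A; (b) for any such ρ*, the function η(g,h) := ρ*(g) ∘ ρ*(h) ∘ ρ*(gh)^{-1} takes values in Γ_{A',A} ≅ Der ⊗_k I and is a 2-cocycle for the G-action on Der ⊗_k I given by conjugation with lifts of ρ(g) (equivalently g·(d ⊗ ε) = (ρ(g) ∘ d ∘ ρ(g)^{-1}) ⊗ ε); (c) the class of η in H^2(G, Der ⊗_k I) does not depend on the choice of ρ*; (d) this class vanishes if and only if there exists a group homomorphism ρ_{A'} : G → Γ_{A'} whose reduction to A equals ρ_A. -/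
/-!
An `A`-algebra endomorphism `σ` of `A⟦X⟧` for which `σ X` has nilpotent constant term is the
substitution `X ↦ σ X`: high powers of `σ X` have high order, so `σ` is determined by its values
on polynomials. Over a local ring of dimension zero every automorphism is of this kind, so lifting
the coefficients of `σ X` along `π : A' → A` lifts `σ`. Since `I = ker π` is finitely generated
with `I ^ 2 = 0`, an endomorphism `e` of `A'⟦X⟧` reducing to the identity fixes `I⟦X⟧` pointwise,
so `e y = (y - x) + e x` whenever `y ≡ x mod I`. Hence such `e` are bijective (so lifts of
automorphisms are automorphisms) and commute with each other. Once the kernel `Γ_{A',A}` is known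
to be abelian, (a)–(d) are pure group theory.
-/

open PowerSeries

/-- the obstruction `2`-cochain `η(g,h) = ρ*(g) ∘ ρ*(h) ∘ ρ*(gh)⁻¹` associated to a
set-theoretic lift `ρ*`. -/
noncomputable def obsCocycle {G : Type} [Group G] {A' : Type} [CommRing A']
    (ρs : G → (PowerSeries A' ≃ₐ[A'] PowerSeries A')) (g h : G) :
    PowerSeries A' ≃ₐ[A'] PowerSeries A' :=
  ρs g * ρs h * (ρs (g * h))⁻¹

namespace PowerSeries

variable {R : Type*} [CommRing R]

theorem coeff_mul_eq_zero_of_forall_coeff_le {f : R⟦X⟧} {d : ℕ}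
    (hf : ∀ i ≤ d, coeff i f = 0) (w : R⟦X⟧) : coeff d (f * w) = 0 :=
  have hdvd : X ^ (d + 1) ∣ f := X_pow_dvd_iff.mpr fun i hi => hf i (by omega)
  X_pow_dvd_iff.mp (dvd_mul_of_dvd_left hdvd w) d (by omega)

theorem algHom_apply_eq_subst (σ : R⟦X⟧ →ₐ[R] R⟦X⟧) (hσ : HasSubst (σ X)) (x : R⟦X⟧) :
    σ x = subst (σ X) x := by
  have hpoly : σ.comp (Polynomial.coeToPowerSeries.algHom R) =
      (substAlgHom hσ).comp (Polynomial.coeToPowerSeries.algHom R) :=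
    Polynomial.algHom_ext (by simp [substAlgHom_X])
  ext d
  obtain ⟨N, hN⟩ := (hσ.eventually_coeff_pow_eq_zero d).exists
  rw [eq_X_pow_mul_shift_add_trunc N x, ← coe_substAlgHom hσ]
  simp only [map_add, map_mul, map_pow, substAlgHom_X]
  rw [coeff_mul_eq_zero_of_forall_coeff_le hN, coeff_mul_eq_zero_of_forall_coeff_le hN,
    zero_add, zero_add]
  exact congrArg (coeff d) (AlgHom.congr_fun hpoly (trunc N x))

theorem hasSubst_algEquiv_X [IsLocalRing R] [Ring.KrullDimLE 0 R] (σ : R⟦X⟧ ≃ₐ[R] R⟦X⟧) :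
    HasSubst (σ X) := by
  refine Ring.KrullDimLE.isNilpotent_iff_mem_nonunits.mpr fun hunit => ?_
  have hX : IsUnit (X : R⟦X⟧) := by
    simpa using (isUnit_iff_constantCoeff.mpr hunit).map σ.symm
  simpa using isUnit_iff_constantCoeff.mp hX

variable {A' A : Type*} [CommRing A'] [CommRing A] {π : A' →+* A}

theorem exists_algHom_lift (hπ : Function.Surjective π)
    (hπnil : ∀ a ∈ RingHom.ker π, IsNilpotent a) (τ : A⟦X⟧ →ₐ[A] A⟦X⟧) (hτ : HasSubst (τ X)) :
    ∃ T : A'⟦X⟧ →ₐ[A'] A'⟦X⟧, ∀ x, map π (T x) = τ (map π x) := by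
  obtain ⟨f, hf⟩ := map_surjective π hπ (τ X)
  have hfs : HasSubst f := by
    obtain ⟨n, hn⟩ := hτ
    refine (hπnil (MvPowerSeries.constantCoeff f ^ n) ?_).of_pow
    rw [RingHom.mem_ker, map_pow, ← MvPowerSeries.constantCoeff_map]
    exact hf ▸ hn
  refine ⟨substAlgHom hfs, fun x => ?_⟩
  rw [coe_substAlgHom]
  calc map π (subst f x) = subst (map π f) (map π x) := map_subst hfs x
    _ = τ (map π x) := by rw [hf, ← algHom_apply_eq_subst τ hτ]

section SquareZero

variable (hfg : (RingHom.ker π).FG)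
  (hsq : ∀ a ∈ RingHom.ker π, ∀ b ∈ RingHom.ker π, a * b = 0)

include hsq in
theorem smul_eq_zero_of_mem_ker {a : A'} (ha : a ∈ RingHom.ker π) {w : A'⟦X⟧}
    (hw : map π w = 0) : a • w = 0 := by
  ext n
  rw [coeff_smul, smul_eq_mul, map_zero]
  refine hsq a ha _ ?_
  rw [RingHom.mem_ker, ← coeff_map, hw, map_zero]

include hfg hsq in
theorem apply_eq_self_of_map_eq_zero (e : A'⟦X⟧ →ₐ[A'] A'⟦X⟧)
    (he : ∀ x, map π (e x) = map π x) {z : A'⟦X⟧} (hz : map π z = 0) : e z = z := by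
  obtain ⟨s, hs⟩ := hfg
  have hcoeff : ∀ m, coeff m z ∈ Ideal.span (s : Set A') := fun m => by
    rw [hs, RingHom.mem_ker, ← coeff_map, hz, map_zero]
  choose c hc using fun m => Submodule.mem_span_finset.mp (hcoeff m)
  have hz_sum : z = ∑ a ∈ s, a • mk fun m => c m a := by
    ext m
    simp only [map_sum, coeff_smul, coeff_mk, smul_eq_mul, ← (hc m).2, mul_comm]
  have hmem : ∀ a ∈ s, a ∈ RingHom.ker π := fun a ha => hs ▸ Submodule.subset_span ha
  have hfix : ∀ a ∈ s, ∀ y, a • e y = a • y := fun a ha y => by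
    rw [← sub_eq_zero, ← smul_sub]
    exact smul_eq_zero_of_mem_ker hsq (hmem a ha) (by rw [map_sub, he, sub_self])
  rw [hz_sum, map_sum]
  exact Finset.sum_congr rfl fun a ha => by rw [map_smul, hfix a ha]

include hfg hsq in
theorem apply_eq_sub_add_apply (e : A'⟦X⟧ →ₐ[A'] A'⟦X⟧)
    (he : ∀ x, map π (e x) = map π x) {x y : A'⟦X⟧} (hxy : map π y = map π x) :
    e y = y - x + e x := by
  rw [← apply_eq_self_of_map_eq_zero hfg hsq e he (z := y - x) (by rw [map_sub, hxy, sub_self]),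
    ← map_add, sub_add_cancel]

include hfg hsq in
theorem bijective_of_map_apply_eq (e : A'⟦X⟧ →ₐ[A'] A'⟦X⟧)
    (he : ∀ x, map π (e x) = map π x) : Function.Bijective e := by
  refine ⟨(injective_iff_map_eq_zero e).mpr fun x hx => ?_, fun x => ⟨x + (x - e x), ?_⟩⟩
  · have := apply_eq_sub_add_apply hfg hsq e he (he x)
    rwa [hx, map_zero, zero_sub, add_zero, zero_eq_neg] at this
  · rw [apply_eq_sub_add_apply hfg hsq e he (x := x) (by rw [map_add, map_sub, he, sub_self,
      add_zero])]
    abel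

include hfg hsq in
theorem apply_comm_of_map_apply_eq (σ τ : A'⟦X⟧ →ₐ[A'] A'⟦X⟧)
    (hσ : ∀ x, map π (σ x) = map π x) (hτ : ∀ x, map π (τ x) = map π x) (x : A'⟦X⟧) :
    σ (τ x) = τ (σ x) := by
  rw [apply_eq_sub_add_apply hfg hsq σ hσ (hτ x), apply_eq_sub_add_apply hfg hsq τ hτ (hσ x)]
  abel

include hfg hsq in
theorem exists_algEquiv_lift (hπ : Function.Surjective π) (σ : A⟦X⟧ ≃ₐ[A] A⟦X⟧)
    (hσ : HasSubst (σ X)) (hσ' : HasSubst (σ.symm X)) :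
    ∃ σ' : A'⟦X⟧ ≃ₐ[A'] A'⟦X⟧, ∀ x, map π (σ' x) = σ (map π x) := by
  have hπnil : ∀ a ∈ RingHom.ker π, IsNilpotent a := fun a ha =>
    ⟨2, by rw [sq]; exact hsq a ha a ha⟩
  obtain ⟨S, hS⟩ := exists_algHom_lift hπ hπnil σ.toAlgHom hσ
  obtain ⟨T, hT⟩ := exists_algHom_lift hπ hπnil σ.symm.toAlgHom hσ'
  have hST := bijective_of_map_apply_eq hfg hsq (S.comp T) fun x => by simp [hS, hT]
  have hTS := bijective_of_map_apply_eq hfg hsq (T.comp S) fun x => by simp [hS, hT]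
  rw [AlgHom.coe_comp] at hST hTS
  exact ⟨AlgEquiv.ofBijective S ⟨hTS.1.of_comp, hST.2.of_comp⟩, hS⟩

end SquareZero

end PowerSeries

section LiftingObstruction

variable {G Γ' Γ : Type*} [Group G] [Group Γ'] [Group Γ] {H : Subgroup (Γ' × Γ)}

theorem mk_mul_inv_mem {σ σ' : Γ'} {τ : Γ} (h : (σ, τ) ∈ H) (h' : (σ', τ) ∈ H) :
    (σ * σ'⁻¹, (1 : Γ)) ∈ H := by
  simpa using H.mul_mem h (H.inv_mem h')

theorem mk_inv_mul_mem {σ σ' : Γ'} {τ : Γ} (h : (σ, τ) ∈ H) (h' : (σ', τ) ∈ H) :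
    (σ'⁻¹ * σ, (1 : Γ)) ∈ H := by
  simpa using H.mul_mem (H.inv_mem h') h

theorem mk_inv_mem {n : Γ'} (hn : (n, (1 : Γ)) ∈ H) : (n⁻¹, (1 : Γ)) ∈ H := by
  simpa using H.inv_mem hn

theorem mk_inv_mul_mem_of_mk_one_mem {n σ : Γ'} {τ : Γ} (hn : (n, (1 : Γ)) ∈ H)
    (h : (σ, τ) ∈ H) : (n⁻¹ * σ, τ) ∈ H := by
  simpa using H.mul_mem (H.inv_mem hn) h

theorem mk_conj_mem {σ n : Γ'} {τ : Γ} (h : (σ, τ) ∈ H) (hn : (n, (1 : Γ)) ∈ H) :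
    (σ * n * σ⁻¹, (1 : Γ)) ∈ H := by
  simpa using H.mul_mem (H.mul_mem h hn) (H.inv_mem h)

theorem exists_lift_map_one (ρ : G →* Γ) (h : ∀ g, ∃ σ, (σ, ρ g) ∈ H) :
    ∃ s : G → Γ', s 1 = 1 ∧ ∀ g, (s g, ρ g) ∈ H := by
  classical
  choose s hs using h
  refine ⟨Function.update s 1 1, by simp, fun g => ?_⟩
  rcases eq_or_ne g 1 with rfl | hg
  · rw [Function.update_self, map_one]
    exact H.one_mem
  · simpa [Function.update_of_ne hg] using hs g

theorem mk_cochain_mem (ρ : G →* Γ) {s : G → Γ'} (hs : ∀ g, (s g, ρ g) ∈ H) (g h : G) :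
    (s g * s h * (s (g * h))⁻¹, (1 : Γ)) ∈ H :=
  mk_mul_inv_mem (by simpa using H.mul_mem (hs g) (hs h)) (hs (g * h))

theorem cochain_mul_left (u s : G → Γ') (g h : G) :
    u g * s g * (u h * s h) * (u (g * h) * s (g * h))⁻¹ =
      u g * (s g * u h * (s g)⁻¹) * (s g * s h * (s (g * h))⁻¹) * (u (g * h))⁻¹ := by
  group

variable (hK : ∀ a b : Γ', (a, (1 : Γ)) ∈ H → (b, (1 : Γ)) ∈ H → Commute a b)
include hK

theorem cochain_eq_coboundary_mul (ρ : G →* Γ) {s s' : G → Γ'} (hs : ∀ g, (s g, ρ g) ∈ H)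
    (hs' : ∀ g, (s' g, ρ g) ∈ H) (g h : G) :
    s' g * s' h * (s' (g * h))⁻¹ =
      s' g * (s g)⁻¹ * (s g * (s' h * (s h)⁻¹) * (s g)⁻¹) * (s' (g * h) * (s (g * h))⁻¹)⁻¹ *
        (s g * s h * (s (g * h))⁻¹) := by
  set u : G → Γ' := fun g => s' g * (s g)⁻¹
  have hu : ∀ g, s' g = u g * s g := fun g => by simp [u]
  have hcomm := hK _ _ (mk_cochain_mem ρ hs g h)
    (mk_inv_mem (mk_mul_inv_mem (hs' (g * h)) (hs (g * h))))
  simp only [hu]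
  rw [cochain_mul_left, mul_assoc _ (s g * s h * _), hcomm.eq, ← mul_assoc]
  simp [u]

theorem map_mul_of_cochain_eq_coboundary (ρ : G →* Γ) {s u : G → Γ'}
    (hs : ∀ g, (s g, ρ g) ∈ H) (hu : ∀ g, (u g, (1 : Γ)) ∈ H)
    (heq : ∀ g h, s g * s h * (s (g * h))⁻¹ = u g * (s g * u h * (s g)⁻¹) * (u (g * h))⁻¹)
    (g h : G) :
    (u (g * h))⁻¹ * s (g * h) = (u g)⁻¹ * s g * ((u h)⁻¹ * s h) := by
  have hcomm := hK _ _ (mk_inv_mem (hu g)) (mk_inv_mem (mk_conj_mem (hs g) (hu h)))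
  calc (u (g * h))⁻¹ * s (g * h)
      = (s g * u h * (s g)⁻¹)⁻¹ * (u g)⁻¹ * (u g * (s g * u h * (s g)⁻¹) * (u (g * h))⁻¹) *
          s (g * h) := by group
    _ = (u g)⁻¹ * (s g * u h * (s g)⁻¹)⁻¹ * (s g * s h * (s (g * h))⁻¹) * s (g * h) := by
      rw [← hcomm.eq, heq]
    _ = (u g)⁻¹ * s g * ((u h)⁻¹ * s h) := by group

theorem cochain_eq_coboundary_of_monoidHom (ρ : G →* Γ) {s : G → Γ'}
    (hs : ∀ g, (s g, ρ g) ∈ H) (L : G →* Γ') (hL : ∀ g, (L g, ρ g) ∈ H) (g h : G) :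
    s g * s h * (s (g * h))⁻¹ =
      s g * (L g)⁻¹ * (s g * (s h * (L h)⁻¹) * (s g)⁻¹) * (s (g * h) * (L (g * h))⁻¹)⁻¹ := by
  have hcomm := hK _ _ (mk_inv_mul_mem (hs g) (hL g)) (mk_mul_inv_mem (hs h) (hL h))
  calc s g * s h * (s (g * h))⁻¹
      = s g * ((s h * (L h)⁻¹) * ((L g)⁻¹ * s g)) * (s g)⁻¹ * L g * L h * (s (g * h))⁻¹ := by
        group
    _ = s g * (L g)⁻¹ * (s g * (s h * (L h)⁻¹) * (s g)⁻¹) * (s (g * h) * (L (g * h))⁻¹)⁻¹ := by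
        rw [← hcomm.eq, map_mul]
        group

end LiftingObstruction

namespace PowerSeries

variable {A' A : Type*} [CommRing A'] [CommRing A]

/-- The reduction `Γ_{A'} → Γ_A` is encoded by its graph: pairs `(σ', σ)` with `σ'` lifting `σ`.
Its kernel `Γ_{A',A}` is `{σ' | (σ', 1) ∈ liftingPairs π}`. -/
def liftingPairs (π : A' →+* A) : Subgroup ((A'⟦X⟧ ≃ₐ[A'] A'⟦X⟧) × (A⟦X⟧ ≃ₐ[A] A⟦X⟧)) where
  carrier := {p | ∀ x, map π (p.1 x) = p.2 (map π x)}
  mul_mem' {p q} hp hq x := (hp (q.1 x)).trans (congrArg p.2 (hq x))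
  one_mem' _ := rfl
  inv_mem' {p} hp x := p.2.injective <| by
    simp only [Prod.fst_inv, Prod.snd_inv, AlgEquiv.aut_inv, AlgEquiv.apply_symm_apply]
    rw [← hp (p.1.symm x), AlgEquiv.apply_symm_apply]

theorem commute_of_mk_one_mem_liftingPairs {π : A' →+* A} (hfg : (RingHom.ker π).FG)
    (hsq : ∀ a ∈ RingHom.ker π, ∀ b ∈ RingHom.ker π, a * b = 0) (σ τ : A'⟦X⟧ ≃ₐ[A'] A'⟦X⟧)
    (hσ : (σ, 1) ∈ liftingPairs π) (hτ : (τ, 1) ∈ liftingPairs π) :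
    Commute σ τ :=
  AlgEquiv.ext <| apply_comm_of_map_apply_eq hfg hsq σ.toAlgHom τ.toAlgHom hσ hτ

end PowerSeries

theorem statement3_general
    (G : Type) [Group G]
    (A' A : Type) [CommRing A'] [CommRing A]
    [IsLocalRing A'] [IsLocalRing A] [IsArtinianRing A'] [IsArtinianRing A]
    (π : A' →+* A) (hπ : Function.Surjective π)
    (hsmall : ∀ a ∈ IsLocalRing.maximalIdeal A', ∀ x ∈ RingHom.ker π, a * x = 0)
    -- `ρ_A`, a lift of `ρ` to `A`
    (ρA : G →* (PowerSeries A ≃ₐ[A] PowerSeries A)) :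
    -- (a) existence of a set-theoretic lift of `ρ_A` to `A'`
    (∃ ρs : G → (PowerSeries A' ≃ₐ[A'] PowerSeries A'),
      ρs 1 = 1 ∧ ∀ g x, PowerSeries.map π (ρs g x) = ρA g (PowerSeries.map π x)) ∧
    -- (b) `η` has values in `Γ_{A',A}` and is a 2-cocycle
    (∀ ρs : G → (PowerSeries A' ≃ₐ[A'] PowerSeries A'),
      ρs 1 = 1 → (∀ g x, PowerSeries.map π (ρs g x) = ρA g (PowerSeries.map π x)) →
      (∀ g h x, PowerSeries.map π (obsCocycle ρs g h x) = PowerSeries.map π x) ∧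
      (∀ g h l, obsCocycle ρs g h * obsCocycle ρs (g * h) l =
        (ρs g * obsCocycle ρs h l * (ρs g)⁻¹) * obsCocycle ρs g (h * l))) ∧
    -- (c) the class of `η` is independent of the choice of `ρ*`
    (∀ ρs ρs' : G → (PowerSeries A' ≃ₐ[A'] PowerSeries A'),
      ρs 1 = 1 → (∀ g x, PowerSeries.map π (ρs g x) = ρA g (PowerSeries.map π x)) →
      ρs' 1 = 1 → (∀ g x, PowerSeries.map π (ρs' g x) = ρA g (PowerSeries.map π x)) →
      ∃ u : G → (PowerSeries A' ≃ₐ[A'] PowerSeries A'),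
        (∀ g x, PowerSeries.map π (u g x) = PowerSeries.map π x) ∧
        ∀ g h, obsCocycle ρs' g h =
          u g * (ρs g * u h * (ρs g)⁻¹) * (u (g * h))⁻¹ * obsCocycle ρs g h) ∧
    -- (d) the class vanishes iff a homomorphic lift of `ρ_A` exists
    (∀ ρs : G → (PowerSeries A' ≃ₐ[A'] PowerSeries A'),
      ρs 1 = 1 → (∀ g x, PowerSeries.map π (ρs g x) = ρA g (PowerSeries.map π x)) →
      ((∃ u : G → (PowerSeries A' ≃ₐ[A'] PowerSeries A'),
          (∀ g x, PowerSeries.map π (u g x) = PowerSeries.map π x) ∧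
          ∀ g h, obsCocycle ρs g h =
            u g * (ρs g * u h * (ρs g)⁻¹) * (u (g * h))⁻¹) ↔
        (∃ L : G →* (PowerSeries A' ≃ₐ[A'] PowerSeries A'),
          ∀ g x, PowerSeries.map π (L g x) = ρA g (PowerSeries.map π x)))) := by
  have hsq : ∀ a ∈ RingHom.ker π, ∀ b ∈ RingHom.ker π, a * b = 0 := fun a ha =>
    hsmall a (IsLocalRing.le_maximalIdeal (RingHom.ker_ne_top π) ha)
  have hfg : (RingHom.ker π).FG := IsNoetherian.noetherian _
  have hK := commute_of_mk_one_mem_liftingPairs hfg hsq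
  have hlift : ∀ g, ∃ σ, (σ, ρA g) ∈ liftingPairs π := fun g =>
    exists_algEquiv_lift hfg hsq hπ (ρA g) (hasSubst_algEquiv_X _) (hasSubst_algEquiv_X _)
  refine ⟨exists_lift_map_one ρA hlift, fun ρs _ hρs => ?_, fun ρs ρs' _ hρs _ hρs' => ?_,
    fun ρs _ hρs => ⟨?_, ?_⟩⟩
  · exact ⟨mk_cochain_mem (H := liftingPairs π) ρA hρs,
      fun g h l => by simp only [obsCocycle, mul_assoc g h l]; group⟩
  · exact ⟨_, fun g => mk_mul_inv_mem (H := liftingPairs π) (hρs' g) (hρs g),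
      cochain_eq_coboundary_mul hK ρA hρs hρs'⟩
  · rintro ⟨u, hu, heq⟩
    refine ⟨MonoidHom.mk' (fun g => (u g)⁻¹ * ρs g)
      fun g h => map_mul_of_cochain_eq_coboundary hK ρA hρs hu heq g h, fun g => ?_⟩
    exact mk_inv_mul_mem_of_mk_one_mem (H := liftingPairs π) (hu g) (hρs g)
  · rintro ⟨L, hL⟩
    exact ⟨_, fun g => mk_mul_inv_mem (H := liftingPairs π) (hρs g) (hL g),
      cochain_eq_coboundary_of_monoidHom hK ρA hρs L hL⟩

/-- Let `A' → A` be a small surjection in `C` with kernel `I`, and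
`ρ_A : G → Γ_A` a lift of `ρ` to `A`.  (a) There is a set-theoretic lift
`ρ* : G → Γ_{A'}` of `ρ_A` with `ρ*(1) = id`; (b) for any such `ρ*` the function
`η(g,h) = ρ*(g)∘ρ*(h)∘ρ*(gh)⁻¹` takes values in `Γ_{A',A}` and is a `2`-cocycle for the
`G`-action on `Γ_{A',A} ≅ Der ⊗ I` given by conjugation with lifts of `ρ(g)`; (c) its
class in `H²(G, Der ⊗ I)` is independent of the choice of `ρ*`; (d) the class vanishes
iff there is a homomorphic lift `ρ_{A'} : G → Γ_{A'}` of `ρ_A`. -/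
theorem statement3
    (p : ℕ) [Fact p.Prime]
    (k : Type) [Field k] [CharP k p] [PerfectField k]
    (G : Type) [Group G] [Finite G]
    (ρ : G →* (PowerSeries k ≃ₐ[k] PowerSeries k)) (hρ : Function.Injective ρ)
    (A' A : Type) [CommRing A'] [CommRing A]
    [Algebra (WittVector p k) A'] [Algebra (WittVector p k) A]
    [IsLocalRing A'] [IsLocalRing A] [IsArtinianRing A'] [IsArtinianRing A]
    (resA' : A' →+* k) (hres'surj : Function.Surjective resA')
    (hres'ker : RingHom.ker resA' = IsLocalRing.maximalIdeal A')
    (resA : A →+* k) (hressurj : Function.Surjective resA)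
    (hresker : RingHom.ker resA = IsLocalRing.maximalIdeal A)
    (π : A' →+* A) (hπ : Function.Surjective π) (hπres : resA.comp π = resA')
    (hsmall : ∀ a ∈ IsLocalRing.maximalIdeal A', ∀ x ∈ RingHom.ker π, a * x = 0)
    -- `ρ_A`, a lift of `ρ` to `A`
    (ρA : G →* (PowerSeries A ≃ₐ[A] PowerSeries A))
    (hρA : ∀ g x, PowerSeries.map resA (ρA g x) = ρ g (PowerSeries.map resA x)) :
    -- (a) existence of a set-theoretic lift of `ρ_A` to `A'`
    (∃ ρs : G → (PowerSeries A' ≃ₐ[A'] PowerSeries A'),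
      ρs 1 = 1 ∧ ∀ g x, PowerSeries.map π (ρs g x) = ρA g (PowerSeries.map π x)) ∧
    -- (b) `η` has values in `Γ_{A',A}` and is a 2-cocycle
    (∀ ρs : G → (PowerSeries A' ≃ₐ[A'] PowerSeries A'),
      ρs 1 = 1 → (∀ g x, PowerSeries.map π (ρs g x) = ρA g (PowerSeries.map π x)) →
      (∀ g h x, PowerSeries.map π (obsCocycle ρs g h x) = PowerSeries.map π x) ∧
      (∀ g h l, obsCocycle ρs g h * obsCocycle ρs (g * h) l =
        (ρs g * obsCocycle ρs h l * (ρs g)⁻¹) * obsCocycle ρs g (h * l))) ∧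
    -- (c) the class of `η` is independent of the choice of `ρ*`
    (∀ ρs ρs' : G → (PowerSeries A' ≃ₐ[A'] PowerSeries A'),
      ρs 1 = 1 → (∀ g x, PowerSeries.map π (ρs g x) = ρA g (PowerSeries.map π x)) →
      ρs' 1 = 1 → (∀ g x, PowerSeries.map π (ρs' g x) = ρA g (PowerSeries.map π x)) →
      ∃ u : G → (PowerSeries A' ≃ₐ[A'] PowerSeries A'),
        (∀ g x, PowerSeries.map π (u g x) = PowerSeries.map π x) ∧
        ∀ g h, obsCocycle ρs' g h =
          u g * (ρs g * u h * (ρs g)⁻¹) * (u (g * h))⁻¹ * obsCocycle ρs g h) ∧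
    -- (d) the class vanishes iff a homomorphic lift of `ρ_A` exists
    (∀ ρs : G → (PowerSeries A' ≃ₐ[A'] PowerSeries A'),
      ρs 1 = 1 → (∀ g x, PowerSeries.map π (ρs g x) = ρA g (PowerSeries.map π x)) →
      ((∃ u : G → (PowerSeries A' ≃ₐ[A'] PowerSeries A'),
          (∀ g x, PowerSeries.map π (u g x) = PowerSeries.map π x) ∧
          ∀ g h, obsCocycle ρs g h =
            u g * (ρs g * u h * (ρs g)⁻¹) * (u (g * h))⁻¹) ↔
        (∃ L : G →* (PowerSeries A' ≃ₐ[A'] PowerSeries A'),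
          ∀ g x, PowerSeries.map π (L g x) = ρA g (PowerSeries.map π x)))) :=
  statement3_general G A' A π hπ hsmall ρA
end

section
/- Let A be an object of C and ρ_A : G → Aut_A(A[[t]]) a lift of the local G-action ρ to A. Set y = ∏_{g∈G} ρ_A(g)(t) ∈ A[[t]] (the constant term of y is nilpotent, so substitution of y into power series over A converges t-adically). Then the ring of invariants A[[t]]^G = {x ∈ A[[t]] : ρ_A(g)(x) = x for all g ∈ G} equals A[[y]] := {h(y) : h ∈ A[[T]]}. -/
/-!
The orbit product `y = ∏_g ρ_A(g)(t)` is invariant, has constant coefficient `0`, and its reduction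
`∏_g ρ(g)(t)` has order `|G|`, because an automorphism of `k[[t]]` sends `t` to a uniformizer.
As `A` is artinian, hence complete, iterated Weierstrass division by `y` writes any `x ∈ A[[t]]`
as `∑_{i<|G|} h_i(y) tⁱ`. If `x` is invariant, applying every `ρ_A(g)` gives the Vandermonde
system `∑_i h_i(y) ρ_A(g)(t)ⁱ = x`, whose determinant is a non-zero-divisor because each
`ρ_A(g)(t) - ρ_A(g')(t)` has nonzero reduction (`ρ` is injective); hence `x = h_0(y)`.
Conversely `h(y)` is invariant: an `A`-algebra endomorphism `φ` of `A[[t]]` such that `φ(t)` has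
nilpotent constant coefficient is `t`-adically continuous.
-/

open PowerSeries
open scoped Classical

/-- `t`-adic substitution `h(y)`: the `m`-th coefficient of `h(y)` is the eventual value
of the `m`-th coefficient of the partial sums `∑_{n<M} h_n yⁿ` (with junk value `0` if the
sequence of coefficients does not stabilize). -/
noncomputable def substSeries {A : Type} [CommRing A] (y h : PowerSeries A) :
    PowerSeries A :=
  PowerSeries.mk fun m =>
    if H : ∃ c : A, ∀ᶠ M in Filter.atTop,
        PowerSeries.coeff (R := A) m
          (∑ n ∈ Finset.range M, PowerSeries.C (R := A) (PowerSeries.coeff (R := A) n h) * y ^ n) = c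
    then H.choose else 0

open Finset Filter
open scoped nonZeroDivisors

namespace PowerSeries

variable {A : Type*} [CommRing A]

theorem eq_of_forall_X_pow_dvd_sub {f g : A⟦X⟧} (h : ∀ n, X ^ n ∣ f - g) : f = g := by
  ext m
  rw [← sub_eq_zero, ← map_sub]
  exact X_pow_dvd_iff.mp (h (m + 1)) m m.lt_succ_self

theorem X_pow_dvd_pow_add {f : A⟦X⟧} {N : ℕ} (hN : constantCoeff f ^ N = 0) (n : ℕ) :
    X ^ n ∣ f ^ (n + N) := by
  have hX : X ∣ f - C (constantCoeff f) := by simp [X_dvd_iff]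
  rw [← Ideal.mem_span_singleton, ← sub_add_cancel f (C (constantCoeff f))]
  refine Ideal.add_pow_mem_of_pow_mem_of_le _ (m := n) (n := N) ?_ ?_ (by omega)
  · exact Ideal.mem_span_singleton.mpr (pow_dvd_pow_of_dvd hX n)
  · simp [← map_pow, hN]

theorem X_pow_dvd_map {F : Type*} [FunLike F A⟦X⟧ A⟦X⟧] [AlgHomClass F A A⟦X⟧ A⟦X⟧]
    (φ : F) {N : ℕ} (hN : constantCoeff (φ X) ^ N = 0) {n : ℕ} {f : A⟦X⟧}
    (hf : X ^ (n + N) ∣ f) : X ^ n ∣ φ f := by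
  obtain ⟨g, rfl⟩ := hf
  rw [map_mul, map_pow]
  exact (X_pow_dvd_pow_add hN n).mul_right _

theorem algHom_ext_of_isNilpotent {φ ψ : A⟦X⟧ →ₐ[A] A⟦X⟧} (hX : φ X = ψ X)
    (hφ : IsNilpotent (constantCoeff (φ X))) : φ = ψ := by
  obtain ⟨N, hN⟩ := hφ
  have hpoly (p : Polynomial A) : φ p = ψ p := by
    have := Polynomial.algHom_ext (f := φ.comp (Polynomial.coeToPowerSeries.algHom A))
      (g := ψ.comp (Polynomial.coeToPowerSeries.algHom A)) (by simpa using hX)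
    simpa using congr($this p)
  ext f : 1
  refine eq_of_forall_X_pow_dvd_sub fun n => ?_
  rw [f.eq_X_pow_mul_shift_add_trunc (n + N), map_add, map_add, hpoly, add_sub_add_right_eq_sub,
    map_mul, map_mul, map_pow, map_pow, hX, ← mul_sub]
  exact (X_pow_dvd_pow_add (hX ▸ hN) n).mul_right _

theorem mem_nonZeroDivisors_of_map_residue_ne_zero [IsLocalRing A]
    [IsHausdorff (IsLocalRing.maximalIdeal A) A] {f : A⟦X⟧}
    (hf : f.map (IsLocalRing.residue A) ≠ 0) : f ∈ A⟦X⟧⁰ :=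
  mem_nonZeroDivisors_iff_left.mpr fun g hg =>
    ((IsWeierstrassDivisor.of_map_ne_zero hf).eq_zero_of_mul_eq (r := 0)
      (by simp) (by simpa using hg)).1

theorem order_map_of_injective {R S : Type*} [Semiring R] [Semiring S] {f : R →+* S}
    (hf : Function.Injective f) (φ : R⟦X⟧) : (φ.map f).order = φ.order := by
  refine le_antisymm ?_ (le_order_map f)
  rcases eq_or_ne φ 0 with rfl | hφ
  · simp
  calc (φ.map f).order ≤ φ.order.toNat :=
        order_le _ (by rw [coeff_map]; exact (map_ne_zero_iff f hf).mpr (coeff_order hφ))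
    _ = φ.order := ENat.natCast_toNat (order_eq_top.not.mpr hφ)

variable {k : Type*} [Field k]

theorem constantCoeff_algEquiv_X (φ : k⟦X⟧ ≃ₐ[k] k⟦X⟧) : constantCoeff (φ X) = 0 := by
  by_contra h
  have := (isUnit_map_iff φ X).mp (isUnit_iff_constantCoeff.mpr (isUnit_iff_ne_zero.mpr h))
  simpa using this.map constantCoeff

theorem order_algEquiv_X (φ : k⟦X⟧ ≃ₐ[k] k⟦X⟧) : (φ X).order = 1 := by
  refine order_eq_nat.mpr ⟨fun h1 => ?_, fun i hi => ?_⟩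
  · have hdvd : X ^ 2 ∣ φ X := X_pow_dvd_iff.mpr fun m hm => by
      interval_cases m
      · simpa using constantCoeff_algEquiv_X φ
      · exact h1
    obtain ⟨w, hw⟩ := hdvd
    have hX : X ^ 2 ∣ φ.symm (φ X) := by
      rw [hw, map_mul, map_pow]
      exact (pow_dvd_pow_of_dvd (X_dvd_iff.mpr (constantCoeff_algEquiv_X φ.symm)) 2).mul_right _
    rw [φ.symm_apply_apply] at hX
    simpa using X_pow_dvd_iff.mp hX 1 one_lt_two
  · simpa [Nat.lt_one_iff.mp hi] using constantCoeff_algEquiv_X φ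

end PowerSeries

section Substitution

variable {A : Type} [CommRing A] {y : A⟦X⟧}

noncomputable def partialSubst (y h : A⟦X⟧) (M : ℕ) : A⟦X⟧ :=
  ∑ n ∈ range M, C (coeff n h) * y ^ n

theorem X_pow_dvd_partialSubst_sub (hy : constantCoeff y = 0) (h : A⟦X⟧) {M M' : ℕ}
    (hM : M ≤ M') : X ^ M ∣ partialSubst y h M' - partialSubst y h M := by
  rw [partialSubst, partialSubst, ← sum_range_add_sum_Ico _ hM, add_sub_cancel_left]
  exact dvd_sum fun n hn => ((pow_dvd_pow X (mem_Ico.mp hn).1).trans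
    (pow_dvd_pow_of_dvd (X_dvd_iff.mpr hy) n)).mul_left _

theorem coeff_partialSubst_eventually_eq (hy : constantCoeff y = 0) (h : A⟦X⟧) (m : ℕ) :
    ∀ᶠ M in atTop, coeff m (partialSubst y h M) = coeff m (partialSubst y h (m + 1)) :=
  eventually_atTop.mpr ⟨m + 1, fun _ hM => by
    rw [← sub_eq_zero, ← map_sub]
    exact X_pow_dvd_iff.mp (X_pow_dvd_partialSubst_sub hy h hM) m m.lt_succ_self⟩

theorem X_pow_dvd_substSeries_sub (hy : constantCoeff y = 0) (h : A⟦X⟧) (M : ℕ) :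
    X ^ M ∣ substSeries y h - partialSubst y h M := by
  refine X_pow_dvd_iff.mpr fun m hm => ?_
  -- the sum is spelled out so that `dif_pos H` matches the condition inside `substSeries`
  have H : ∃ c, ∀ᶠ M in atTop, coeff m (∑ n ∈ range M, C (coeff n h) * y ^ n) = c :=
    ⟨_, coeff_partialSubst_eventually_eq hy h m⟩
  obtain ⟨M', hc, hM'⟩ := (H.choose_spec.and (eventually_ge_atTop M)).exists
  rw [map_sub, substSeries, coeff_mk, dif_pos H, ← hc, ← map_sub]
  exact X_pow_dvd_iff.mp (X_pow_dvd_partialSubst_sub hy h hM') m hm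

theorem map_substSeries {F : Type*} [FunLike F A⟦X⟧ A⟦X⟧] [AlgHomClass F A A⟦X⟧ A⟦X⟧]
    (φ : F) (hy : constantCoeff y = 0) (hφy : φ y = y) (hφ : IsNilpotent (constantCoeff (φ X)))
    (h : A⟦X⟧) : φ (substSeries y h) = substSeries y h := by
  obtain ⟨N, hN⟩ := hφ
  refine eq_of_forall_X_pow_dvd_sub fun n => ?_
  have hP : φ (partialSubst y h (n + N)) = partialSubst y h (n + N) := by
    simp [partialSubst, hφy, ← algebraMap_eq, AlgHomClass.commutes]
  have hd := X_pow_dvd_substSeries_sub hy h (n + N)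
  have hsplit : φ (substSeries y h) - substSeries y h =
      φ (substSeries y h - partialSubst y h (n + N)) -
        (substSeries y h - partialSubst y h (n + N)) := by
    rw [map_sub, hP]
    ring
  rw [hsplit]
  exact dvd_sub (X_pow_dvd_map φ hN hd) ((pow_dvd_pow X (Nat.le_add_right n N)).trans hd)

theorem coe_eq_sum_range_C_mul_X_pow {p : Polynomial A} {n : ℕ} (hp : p.degree < n) :
    (p : A⟦X⟧) = ∑ i ∈ range n, C (p.coeff i) * X ^ i := by
  ext m
  simp only [Polynomial.coeff_coe, map_sum, coeff_C_mul_X_pow, sum_ite_eq, mem_range]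
  split_ifs with hm
  · rfl
  · exact Polynomial.coeff_eq_zero_of_degree_lt (hp.trans_le (by exact_mod_cast not_lt.mp hm))

theorem eq_sum_substSeries_mul_X_pow (hy : constantCoeff y = 0) {n : ℕ} {Q : ℕ → A⟦X⟧}
    {R : ℕ → Polynomial A} (hR : ∀ j, (R j).degree < n) (hQ : ∀ j, Q j = y * Q (j + 1) + R j) :
    Q 0 = ∑ i ∈ range n, substSeries y (mk fun j => (R j).coeff i) * X ^ i := by
  -- `Q 0 = ∑_{j<J} R_j yʲ + yᴶ Q_J`, regrouped by powers of `X`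
  have hQ0 : ∀ J, Q 0 = ∑ i ∈ range n, partialSubst y (mk fun j => (R j).coeff i) J * X ^ i
      + y ^ J * Q J := by
    intro J
    induction J with
    | zero => simp [partialSubst]
    | succ J ih =>
      rw [ih, hQ J]
      simp only [partialSubst, sum_range_succ, add_mul, sum_add_distrib, coeff_mk]
      rw [coe_eq_sum_range_C_mul_X_pow (hR J), mul_add, mul_sum]
      simp only [mul_left_comm (y ^ J) (C _), mul_assoc]
      ring
  refine (eq_of_forall_X_pow_dvd_sub fun J => ?_).symm
  rw [hQ0 J, sub_add_eq_sub_sub, ← sum_sub_distrib]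
  refine dvd_sub (dvd_sum fun i _ => ?_) ((pow_dvd_pow_of_dvd (X_dvd_iff.mpr hy) J).mul_right _)
  rw [← sub_mul]
  exact (X_pow_dvd_substSeries_sub hy _ J).mul_right _

theorem exists_eq_sum_substSeries_mul_X_pow [IsLocalRing A]
    [IsAdicComplete (IsLocalRing.maximalIdeal A) A] (hy : constantCoeff y = 0)
    (hy' : y.map (IsLocalRing.residue A) ≠ 0) (x : A⟦X⟧) :
    ∃ s : ℕ → A⟦X⟧, x = ∑ i ∈ range (y.map (IsLocalRing.residue A)).order.toNat,
      substSeries y (s i) * X ^ i := by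
  let Q : ℕ → A⟦X⟧ := fun j => (· /ʷ y)^[j] x
  refine ⟨_, eq_sum_substSeries_mul_X_pow hy (Q := Q) (R := fun j => Q j %ʷ y)
    (fun j => degree_weierstrassMod_lt (Q j) y) fun j => ?_⟩
  simp only [Q, Function.iterate_succ_apply']
  exact eq_mul_weierstrassDiv_add_weierstrassMod _ hy'

end Substitution

namespace Matrix

variable {R : Type*} [CommRing R]

theorem det_vandermonde_mem_nonZeroDivisors {n : ℕ} {v : Fin n → R}
    (hv : Pairwise fun i j => v i - v j ∈ R⁰) : (vandermonde v).det ∈ R⁰ := by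
  rw [det_vandermonde]
  exact prod_mem fun i _ => prod_mem fun j hj => hv (mem_Ioi.mp hj).ne'

theorem eq_of_forall_sum_mul_pow_eq {ι : Type*} [Fintype ι] [Nonempty ι] {v : ι → R}
    (hv : Pairwise fun i j => v i - v j ∈ R⁰) {s : ℕ → R} {x : R}
    (h : ∀ i, ∑ j ∈ range (Fintype.card ι), s j * v i ^ j = x) : s 0 = x := by
  let e := (Fintype.equivFin ι).symm
  let c : Fin (Fintype.card ι) → R := fun j => s j - if (j : ℕ) = 0 then x else 0
  have hc : vandermonde (v ∘ e) *ᵥ c = 0 := by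
    ext i
    simp only [mulVec, dotProduct, vandermonde_apply, Function.comp_apply, c, mul_sub,
      sum_sub_distrib]
    rw [Fin.sum_univ_eq_sum_range (fun j => v (e i) ^ j * s j)]
    simp [mul_comm, h]
  have hc0 := eq_zero_of_det_mem_nonZeroDivisors_of_mulVec_eq_zero
    (det_vandermonde_mem_nonZeroDivisors (hv.comp_of_injective e.injective)) hc
  simpa [c, sub_eq_zero] using congrFun hc0 ⟨0, Fintype.card_pos⟩

end Matrix

section Lift

open IsLocalRing

variable {k A ι : Type*} [Field k] [CommRing A] [IsLocalRing A] {resA : A →+* k}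

theorem exists_map_map_residue_eq (hresker : RingHom.ker resA = maximalIdeal A) :
    ∃ ψ : ResidueField A →+* k, ∀ f : A⟦X⟧, (f.map (residue A)).map ψ = f.map resA :=
  ⟨Ideal.Quotient.lift _ resA fun a ha => by rwa [← RingHom.mem_ker, hresker],
    fun f => by ext n; simp only [coeff_map]; rfl⟩

theorem isNilpotent_constantCoeff_of_map_eq [IsArtinianRing A]
    (hresker : RingHom.ker resA = maximalIdeal A) {φ : k⟦X⟧ ≃ₐ[k] k⟦X⟧} {f : A⟦X⟧}
    (hf : f.map resA = φ X) : IsNilpotent (constantCoeff f) := by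
  rw [Ring.KrullDimLE.isNilpotent_iff_mem_maximalIdeal, ← hresker, RingHom.mem_ker,
    ← coeff_zero_eq_constantCoeff_apply, ← coeff_map, hf, coeff_zero_eq_constantCoeff_apply,
    constantCoeff_algEquiv_X]

theorem order_map_residue_prod [Fintype ι] (hresker : RingHom.ker resA = maximalIdeal A)
    {φ : ι → k⟦X⟧ ≃ₐ[k] k⟦X⟧} {v : ι → A⟦X⟧} (hv : ∀ i, (v i).map resA = φ i X) :
    ((∏ i, v i).map (residue A)).order = Fintype.card ι := by
  obtain ⟨ψ, hψ⟩ := exists_map_map_residue_eq hresker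
  rw [← order_map_of_injective ψ.injective, hψ, map_prod]
  simp [hv, order_prod, order_algEquiv_X]

theorem sub_mem_nonZeroDivisors_of_map_eq [IsHausdorff (maximalIdeal A) A]
    (hresker : RingHom.ker resA = maximalIdeal A) {φ : ι → k⟦X⟧ ≃ₐ[k] k⟦X⟧}
    (hφ : Function.Injective φ) {v : ι → A⟦X⟧} (hv : ∀ i, (v i).map resA = φ i X) :
    Pairwise fun i j => v i - v j ∈ A⟦X⟧⁰ := by
  obtain ⟨ψ, hψ⟩ := exists_map_map_residue_eq hresker
  refine fun i j hij => mem_nonZeroDivisors_of_map_residue_ne_zero fun h0 =>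
    hij (hφ (AlgEquiv.coe_toAlgHom_injective ?_))
  refine algHom_ext_of_isNilpotent ?_ (by simp [constantCoeff_algEquiv_X])
  have := congr(map ψ $h0)
  rw [hψ, map_sub, hv, hv, map_zero, sub_eq_zero] at this
  simpa using this

end Lift

theorem apply_prod_apply_eq {G R S : Type*} [Group G] [Fintype G] [CommSemiring R]
    [CommSemiring S] [Algebra R S] (ρ : G →* S ≃ₐ[R] S) (g : G) (s : S) :
    ρ g (∏ h, ρ h s) = ∏ h, ρ h s := by
  rw [map_prod]
  simp_rw [← AlgEquiv.mul_apply, ← map_mul]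
  exact Fintype.prod_equiv (Equiv.mulLeft g) _ _ fun _ => rfl

theorem statement7_general
    (k : Type) [Field k]
    (G : Type) [Group G] [Fintype G]
    (ρ : G →* (PowerSeries k ≃ₐ[k] PowerSeries k)) (hρ : Function.Injective ρ)
    (A : Type) [CommRing A]
    [IsLocalRing A] [IsArtinianRing A]
    (resA : A →+* k)
    (hresker : RingHom.ker resA = IsLocalRing.maximalIdeal A)
    (ρA : G →* (PowerSeries A ≃ₐ[A] PowerSeries A))
    (hρA : ∀ g x, PowerSeries.map resA (ρA g x) = ρ g (PowerSeries.map resA x))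
    (y : PowerSeries A) (hy : y = ∏ g : G, ρA g PowerSeries.X) :
    -- substitution of `y` converges `t`-adically
    (∀ (h : PowerSeries A) (m : ℕ), ∃ c : A, ∀ᶠ M in Filter.atTop,
      PowerSeries.coeff (R := A) m
        (∑ n ∈ Finset.range M, PowerSeries.C (R := A) (PowerSeries.coeff (R := A) n h) * y ^ n) = c) ∧
    -- `A[[t]]^G = A[[y]]`
    {x : PowerSeries A | ∀ g : G, ρA g x = x} =
      {x : PowerSeries A | ∃ h : PowerSeries A, x = substSeries y h} := by
  have hred (g : G) : (ρA g X).map resA = ρ g X := by rw [hρA, map_X]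
  have hnil (g : G) : IsNilpotent (constantCoeff (ρA g X)) :=
    isNilpotent_constantCoeff_of_map_eq hresker (hred g)
  have hy0 : constantCoeff y = 0 := by
    rw [hy, map_prod]
    exact prod_eq_zero (mem_univ 1) (by simp)
  have hyfix (g : G) : ρA g y = y := hy ▸ apply_prod_apply_eq ρA g X
  have hord : (y.map (IsLocalRing.residue A)).order = Fintype.card G :=
    hy ▸ order_map_residue_prod hresker hred
  refine ⟨fun h m => ⟨_, coeff_partialSubst_eventually_eq hy0 h m⟩,
    Set.ext fun x => ⟨fun hx => ?_, ?_⟩⟩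
  · obtain ⟨s, hs⟩ := exists_eq_sum_substSeries_mul_X_pow hy0 (fun h0 => by simp [h0] at hord) x
    rw [hord, ENat.toNat_natCast] at hs
    refine ⟨s 0, (Matrix.eq_of_forall_sum_mul_pow_eq
      (sub_mem_nonZeroDivisors_of_map_eq hresker hρ hred)
      (s := fun i => substSeries y (s i)) fun g => ?_).symm⟩
    conv_rhs => rw [← hx g, hs]
    simp [map_substSeries (ρA g) hy0 (hyfix g) (hnil g)]
  · rintro ⟨h, rfl⟩ g
    exact map_substSeries (ρA g) hy0 (hyfix g) (hnil g) h

/-- Let `A ∈ C` and `ρ_A : G → Aut_A(A[[t]])` a lift of the local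
`G`-action `ρ` to `A`.  With `y = ∏_{g ∈ G} ρ_A(g)(t)`, substitution of `y` into power
series over `A` converges `t`-adically, and the ring of invariants
`A[[t]]^G = {x : ρ_A(g)(x) = x ∀g}` equals `A[[y]] = {h(y) : h ∈ A[[T]]}`. -/
theorem statement7
    (p : ℕ) [Fact p.Prime]
    (k : Type) [Field k] [CharP k p] [PerfectField k]
    (G : Type) [Group G] [Fintype G]
    (ρ : G →* (PowerSeries k ≃ₐ[k] PowerSeries k)) (hρ : Function.Injective ρ)
    (A : Type) [CommRing A] [Algebra (WittVector p k) A]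
    [IsLocalRing A] [IsArtinianRing A]
    (resA : A →+* k) (hressurj : Function.Surjective resA)
    (hresker : RingHom.ker resA = IsLocalRing.maximalIdeal A)
    (ρA : G →* (PowerSeries A ≃ₐ[A] PowerSeries A))
    (hρA : ∀ g x, PowerSeries.map resA (ρA g x) = ρ g (PowerSeries.map resA x))
    (y : PowerSeries A) (hy : y = ∏ g : G, ρA g PowerSeries.X) :
    -- substitution of `y` converges `t`-adically
    (∀ (h : PowerSeries A) (m : ℕ), ∃ c : A, ∀ᶠ M in Filter.atTop,
      PowerSeries.coeff (R := A) m
        (∑ n ∈ Finset.range M, PowerSeries.C (R := A) (PowerSeries.coeff (R := A) n h) * y ^ n) = c) ∧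
    -- `A[[t]]^G = A[[y]]`
    {x : PowerSeries A | ∀ g : G, ρA g x = x} =
      {x : PowerSeries A | ∃ h : PowerSeries A, x = substSeries y h} :=
  statement7_general k G ρ hρ A resA hresker ρA hρA y hy
end

section
/- Let N be a normal subgroup of G, let a : G → k((t)) satisfy a_{gs} = ρ(g)(a_s) + a_g for all g ∈ G, s ∈ N, and set α = −y_N · (y_N')^{-1} · Σ_{s∈N} a_s · f_s' · f_s^{-1} ∈ k((t)). Let d := ord(y_N') (which is the order of the different of the extension k[[t]]^N ⊆ k[[t]]). Then ord(α) ≥ inf_{s∈N} ord(a_s) + #N − d − 1. -/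
open PowerSeries

/-- the canonical embedding `k[[t]] → k((t))`. -/
noncomputable def toL {k : Type} [Field k] (x : PowerSeries k) : LaurentSeries k :=
  HahnSeries.ofPowerSeries ℤ k x

/-- `ord(x) ≥ n` for the `t`-adic valuation on `k((t))` (with `ord 0 = ∞`). -/
def ordGE {k : Type} [Field k] (x : LaurentSeries k) (n : ℤ) : Prop :=
  x = 0 ∨ n ≤ HahnSeries.order x

/-!
Only valuation estimates are needed. Writing `f_s = ρ(s)(t)`, one has `ord(f_s) ≥ 1` since a ring
automorphism of `k[[t]]` maps the non-unit `t` to a non-unit, hence `ord(y_N) ≥ #N`; and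
`ord(f') ≥ ord(f) - 1` for every power series, so each logarithmic derivative `f_s'/f_s` has order
`≥ -1`. The prefactor `y_N / y_N'` then has order `≥ #N - d`, and every summand order
`≥ inf ord(a_s) - 1`.
-/
theorem PowerSeries.order_le_order_derivative_add_one {R : Type*} [CommSemiring R]
    (f : R⟦X⟧) : f.order ≤ (d⁄dX R f).order + 1 := by
  cases h : (d⁄dX R f).order with
  | top => simp
  | coe e =>
    have hcoeff : coeff (e + 1) f * (e + 1) ≠ 0 := by
      rw [← coeff_derivative]; exact (order_eq_nat.mp h).1
    exact_mod_cast order_le _ (left_ne_zero_of_mul hcoeff)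

theorem PowerSeries.one_le_order_map_X {k : Type*} [Field k] {F : Type*}
    [EquivLike F k⟦X⟧ k⟦X⟧] [MulEquivClass F k⟦X⟧ k⟦X⟧] (e : F) : 1 ≤ (e X).order := by
  rw [one_le_order_iff_constCoeff_eq_zero, ← not_ne_iff, ← isUnit_iff_ne_zero,
    ← isUnit_iff_constantCoeff, isUnit_map_iff, isUnit_iff_constantCoeff]
  simp

theorem HahnSeries.orderTop_toPowerSeries_symm {R : Type*} [Semiring R] (f : R⟦X⟧) :
    (toPowerSeries.symm f).orderTop = f.order := by
  rcases eq_or_ne f 0 with rfl | hf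
  · exact (congrArg orderTop (map_zero _)).trans (orderTop_zero.trans PowerSeries.order_zero.symm)
  obtain ⟨n, hn⟩ := ENat.ne_top_iff_exists.mp (order_eq_top.not.mpr hf)
  rw [← hn]
  obtain ⟨hcoeff, hlt⟩ := order_eq_nat.mp hn.symm
  refine orderTop_eq_of_le (by simpa using hcoeff) fun i hi => ?_
  by_contra! h
  exact hi (by simpa using hlt i h)

section

variable {k : Type} [Field k]

theorem orderTop_toL (f : k⟦X⟧) : (toL f).orderTop = ENat.map (↑) f.order := by
  rw [toL, HahnSeries.ofPowerSeries_apply, HahnSeries.orderTop_embDomain,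
    HahnSeries.orderTop_toPowerSeries_symm]
  rfl

theorem ordGE_iff {x : LaurentSeries k} {n : ℤ} : ordGE x n ↔ (n : WithTop ℤ) ≤ x.orderTop := by
  rcases eq_or_ne x 0 with rfl | hx
  · simp [ordGE]
  · simp [ordGE, hx, ← HahnSeries.order_eq_orderTop_of_ne_zero hx]

open HahnSeries in
theorem ordGE_iff_le_addVal {x : LaurentSeries k} {n : ℤ} :
    ordGE x n ↔ (n : WithTop ℤ) ≤ addVal ℤ k x := by
  rw [ordGE_iff, addVal_apply]

theorem ordGE.mono {x : LaurentSeries k} {n m : ℤ} (h : ordGE x n) (hmn : m ≤ n) : ordGE x m :=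
  h.imp id hmn.trans

theorem ordGE.neg {x : LaurentSeries k} {n : ℤ} (h : ordGE x n) : ordGE (-x) n := by
  rw [ordGE_iff_le_addVal, AddValuation.map_neg] at *
  exact h

theorem ordGE.mul {x y : LaurentSeries k} {n m : ℤ} (hx : ordGE x n) (hy : ordGE y m) :
    ordGE (x * y) (n + m) := by
  rw [ordGE_iff_le_addVal, AddValuation.map_mul] at *
  exact_mod_cast add_le_add hx hy

theorem ordGE_sum {ι : Type*} {s : Finset ι} {f : ι → LaurentSeries k} {n : ℤ}
    (h : ∀ i ∈ s, ordGE (f i) n) : ordGE (∑ i ∈ s, f i) n := by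
  simp only [ordGE_iff_le_addVal] at *
  exact AddValuation.map_le_sum _ h

theorem ordGE_inv_of_orderTop_eq {x : LaurentSeries k} {n : ℤ} (hx : x.orderTop = n) :
    ordGE x⁻¹ (-n) := by
  rw [ordGE_iff_le_addVal, AddValuation.map_inv, HahnSeries.addVal_apply, hx]
  rfl

theorem orderTop_toL_of_order_eq {f : k⟦X⟧} {n : ℕ} (h : f.order = n) :
    (toL f).orderTop = n := by
  rw [orderTop_toL, h]
  rfl

theorem ordGE_toL_of_le_order {f : k⟦X⟧} {n : ℕ} (h : n ≤ f.order) : ordGE (toL f) n := by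
  rw [ordGE_iff, orderTop_toL]
  cases hf : f.order with
  | top => simp
  | coe e =>
    rw [hf] at h
    simpa using h

theorem ordGE_toL_derivative_div (f : k⟦X⟧) : ordGE (toL (d⁄dX k f) / toL f) (-1) := by
  rcases eq_or_ne f 0 with rfl | hf
  · left; simp [toL]
  obtain ⟨r, hr⟩ := ENat.ne_top_iff_exists.mp (order_eq_top.not.mpr hf)
  have hderiv : ordGE (toL (d⁄dX k f)) ((r - 1 : ℕ) : ℤ) := by
    refine ordGE_toL_of_le_order ?_
    rw [ENat.natCast_sub, hr, tsub_le_iff_right]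
    exact order_le_order_derivative_add_one f
  rw [div_eq_mul_inv]
  exact (hderiv.mul (ordGE_inv_of_orderTop_eq (orderTop_toL_of_order_eq hr.symm))).mono (by omega)

end

theorem statement10_general
    (k : Type) [Field k]
    (G : Type) [Group G] [Fintype G]
    (ρ : G →* (PowerSeries k ≃ₐ[k] PowerSeries k))
    (N : Subgroup G) [DecidablePred (· ∈ N)]
    (yN : PowerSeries k)
    (hyN : yN = ∏ s ∈ Finset.univ.filter (· ∈ N), ρ s PowerSeries.X)
    (d : ℕ) (hd : (PowerSeries.derivative k yN).order = (d : ℕ∞))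
    (a : G → LaurentSeries k)
    (α : LaurentSeries k)
    (hα : α = -(toL yN * (toL (PowerSeries.derivative k yN))⁻¹ *
      ∑ s ∈ Finset.univ.filter (· ∈ N),
        a s * toL (PowerSeries.derivative k (ρ s PowerSeries.X)) *
          (toL (ρ s PowerSeries.X))⁻¹)) :
    ∀ m : ℤ, (∀ s ∈ N, ordGE (a s) m) →
      ordGE α (m + ((Finset.univ.filter (· ∈ N)).card : ℤ) - (d : ℤ) - 1) := by
  intro m hm
  set S := Finset.univ.filter (· ∈ N)
  have hyN_order : ordGE (toL yN) S.card := by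
    refine ordGE_toL_of_le_order ?_
    calc (S.card : ℕ∞) = ∑ _ ∈ S, 1 := by simp
      _ ≤ ∑ s ∈ S, (ρ s X).order := Finset.sum_le_sum fun s _ => one_le_order_map_X (ρ s)
      _ ≤ yN.order := hyN ▸ le_order_prod _ _
  have hsum : ordGE (∑ s ∈ S, a s * toL (d⁄dX k (ρ s X)) * (toL (ρ s X))⁻¹) (m + -1) :=
    ordGE_sum fun s hs => by
      rw [mul_assoc, ← div_eq_mul_inv]
      exact (hm s (Finset.mem_filter.mp hs).2).mul (ordGE_toL_derivative_div _)
  rw [hα]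
  exact ((hyN_order.mul (ordGE_inv_of_orderTop_eq (orderTop_toL_of_order_eq hd))).mul
    hsum).neg.mono (by omega)

/-- In the situation of the previous lemma, with
`d = ord(y_N')` the order of the different of `k[[t]]^N ⊆ k[[t]]`, one has
`ord(α) ≥ inf_{s∈N} ord(a_s) + #N − d − 1`. -/
theorem statement10
    (p : ℕ) [Fact p.Prime]
    (k : Type) [Field k] [CharP k p] [PerfectField k]
    (G : Type) [Group G] [Fintype G]
    (ρ : G →* (PowerSeries k ≃ₐ[k] PowerSeries k)) (hρ : Function.Injective ρ)
    (ρL : G →* (LaurentSeries k ≃ₐ[k] LaurentSeries k))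
    (hρL : ∀ g x, ρL g (toL x) = toL (ρ g x))
    (N : Subgroup G) (hN : N.Normal) [DecidablePred (· ∈ N)]
    (yN : PowerSeries k)
    (hyN : yN = ∏ s ∈ Finset.univ.filter (· ∈ N), ρ s PowerSeries.X)
    (d : ℕ) (hd : (PowerSeries.derivative k yN).order = (d : ℕ∞))
    (a : G → LaurentSeries k)
    (ha : ∀ g : G, ∀ s ∈ N, a (g * s) = ρL g (a s) + a g)
    (α : LaurentSeries k)
    (hα : α = -(toL yN * (toL (PowerSeries.derivative k yN))⁻¹ *
      ∑ s ∈ Finset.univ.filter (· ∈ N),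
        a s * toL (PowerSeries.derivative k (ρ s PowerSeries.X)) *
          (toL (ρ s PowerSeries.X))⁻¹)) :
    ∀ m : ℤ, (∀ s ∈ N, ordGE (a s) m) →
      ordGE α (m + ((Finset.univ.filter (· ∈ N)).card : ℤ) - (d : ℤ) - 1) :=
  statement10_general k G ρ N yN hyN d hd a α hα
end

section
/- Let N be a normal subgroup of G and let c : G → Der be a map such that c_{gs} = c_g + g·c_s for all g ∈ G, s ∈ N. Set α = −y_N · (y_G'/y_N') · Σ_{s∈N} c_s(f_s)/f_s ∈ k((t)). Then: (i) for every g ∈ G, ρ(g)(α) − α = c_g(y_G) − ρ(g)(y_N)·(y_G'/y_N')·(y_N'/(ρ(g)(y_N))')·Σ_{s∈N} c_{gs}(f_{gs})/f_{gs} + y_N·(y_G'/y_N')·Σ_{s∈N} c_s(f_s)/f_s; in particular ρ(s)(α) − α = c_s(y_G) for all s ∈ N; (ii) ord(α) ≥ ord(y_G') − ord(y_N'), i.e. α lies in the ideal (y_G'/y_N')·k[[t]] of k[[t]] (the extension to k[[t]] of the different of k[[t]]^N over k[[t]]^G). -/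
open PowerSeries

open scoped LaurentSeries

/-!
The cocycle identity rewrites `ρ(g)(c_s(f_s))` as `c_{gs}(f_{gs}) - c_g(f_{gs})`. Summed against
`1/f_{gs}`, the subtracted terms form the logarithmic derivative `c_g(ρ(g) y_N) / ρ(g) y_N`. Every
derivation of `k⟦t⟧` is `f ↦ f' · d(t)`, which gives the chain rule
`(ρ(g) f)' = ρ(g)(f') · f_g'` with `f_g'` a unit; as `y_G` is `G`-invariant,
`ρ(g)(y_G') = y_G' / f_g'`, and the correction term collapses to `c_g(y_G)`. For `s ∈ N`, `ρ(s)`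
permutes the `f_t` with `t ∈ N`, so `ρ(s)(y_N) = y_N` and the two sums in (i) coincide. For (ii),
`y_N · Σ_s c_s(f_s)/f_s = Σ_s c_s(f_s) ∏_{t ≠ s} f_t` is a power series.
-/

def Derivation.conjAlgEquiv {R A : Type*} [CommSemiring R] [CommSemiring A] [Algebra R A]
    (σ : A ≃ₐ[R] A) (d : Derivation R A A) : Derivation R A A where
  toFun a := σ (d (σ.symm a))
  map_add' a b := by simp
  map_smul' r a := by simp
  map_one_eq_zero' := by simp
  leibniz' a b := by simp

namespace PowerSeries
variable {R : Type*} [CommRing R]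

theorem coe_eq_aeval_X (P : Polynomial R) : (P : R⟦X⟧) = Polynomial.aeval (X : R⟦X⟧) P := by
  rw [Polynomial.aeval_def, ← Polynomial.eval₂_C_X_eq_coe]; rfl

theorem derivation_eq_zero_of_apply_X {D : Derivation R R⟦X⟧ R⟦X⟧} (hX : D X = 0) : D = 0 := by
  refine Derivation.ext fun f => ?_
  -- `D` kills polynomials and `D (X ^ m * g) = X ^ m * D g`, so `X ^ m ∣ D f` for every `m`.
  have hdvd : ∀ m : ℕ, X ^ m ∣ D f := by
    intro m
    obtain ⟨g, hg⟩ : X ^ m ∣ f - (trunc m f : R⟦X⟧) :=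
      X_pow_dvd_iff.mpr fun i hi => by simp [coeff_trunc, hi]
    refine ⟨D g, ?_⟩
    rw [sub_eq_iff_eq_add'.mp hg, map_add, coe_eq_aeval_X, Derivation.map_aeval,
      Derivation.leibniz, Derivation.leibniz_pow, hX]
    simp
  rw [Derivation.zero_apply]
  ext n
  simpa using X_pow_dvd_iff.mp (hdvd (n + 1)) n n.lt_succ_self

theorem derivation_apply_eq_derivative_mul (d : Derivation R R⟦X⟧ R⟦X⟧) (f : R⟦X⟧) :
    d f = d⁄dX R f * d X := by
  have := congrArg (· f) (derivation_eq_zero_of_apply_X (D := d - d X • d⁄dX R) (by simp))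
  simpa [sub_eq_zero, mul_comm] using this

theorem derivative_algEquiv_apply (σ : R⟦X⟧ ≃ₐ[R] R⟦X⟧) (f : R⟦X⟧) :
    d⁄dX R (σ f) = σ (d⁄dX R f) * d⁄dX R (σ X) := by
  have := congrArg σ (derivation_apply_eq_derivative_mul ((d⁄dX R).conjAlgEquiv σ.symm) f)
  simpa [Derivation.conjAlgEquiv] using this

theorem isUnit_derivative_algEquiv_X (σ : R⟦X⟧ ≃ₐ[R] R⟦X⟧) : IsUnit (d⁄dX R (σ X)) := by
  have := derivative_algEquiv_apply σ (σ.symm X)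
  simp only [AlgEquiv.apply_symm_apply, derivative_X] at this
  exact IsUnit.of_mul_eq_one_right _ this.symm

end PowerSeries

section FieldOfFractions

variable {A K ι : Type*} [CommRing A] [Field K] (φ : A →+* K)

theorem RingHom.map_prod_mul_sum_mul_inv [DecidableEq ι] (s : Finset ι) (u a : ι → A)
    (hu : ∀ i ∈ s, φ (u i) ≠ 0) :
    φ (∏ i ∈ s, u i) * ∑ i ∈ s, φ (a i) * (φ (u i))⁻¹ =
      φ (∑ i ∈ s, a i * ∏ j ∈ s.erase i, u j) := by
  rw [Finset.mul_sum, map_sum]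
  refine Finset.sum_congr rfl fun i hi => ?_
  rw [← Finset.mul_prod_erase s u hi, map_mul, map_mul]
  field_simp [hu i hi]

theorem Derivation.sum_map_mul_inv_eq {R : Type*} [CommSemiring R] [Algebra R A]
    (d : Derivation R A A) (s : Finset ι) (u : ι → A) (hu : ∀ i ∈ s, φ (u i) ≠ 0) :
    ∑ i ∈ s, φ (d (u i)) * (φ (u i))⁻¹ = φ (d (∏ i ∈ s, u i)) * (φ (∏ i ∈ s, u i))⁻¹ := by
  classical
  induction s using Finset.induction_on with
  | empty => simp
  | insert a t ha ih =>
    have hua : φ (u a) ≠ 0 := hu a (Finset.mem_insert_self a t)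
    have hut : φ (∏ i ∈ t, u i) ≠ 0 := by
      rw [map_prod]
      exact Finset.prod_ne_zero_iff.mpr fun i hi => hu i (Finset.mem_insert_of_mem hi)
    rw [Finset.sum_insert ha, Finset.prod_insert ha,
      ih fun i hi => hu i (Finset.mem_insert_of_mem hi), Derivation.leibniz]
    simp only [smul_eq_mul, map_add, map_mul]
    field_simp
    ring

end FieldOfFractions

namespace LaurentSeries

variable {R : Type*} [Semiring R]

theorem coe_ne_zero {x : R⟦X⟧} (hx : x ≠ 0) : (x : R⸨X⸩) ≠ 0 :=
  (map_ne_zero_iff _ HahnSeries.ofPowerSeries_injective).mpr hx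

theorem order_coe_nonneg (x : R⟦X⟧) : 0 ≤ (x : R⸨X⸩).order := by
  rcases eq_or_ne x 0 with rfl | hx
  · simp
  rw [HahnSeries.le_order_iff_forall (coe_ne_zero hx)]
  intro j hj
  simp [coeff_coe, hj]

theorem order_coe_of_order_eq {x : R⟦X⟧} {n : ℕ} (h : x.order = n) : (x : R⸨X⸩).order = n := by
  obtain ⟨hn, hlt⟩ := PowerSeries.order_eq_nat.mp h
  have hcoeff : (x : R⸨X⸩).coeff n ≠ 0 := by simpa [coeff_coe] using hn
  refine le_antisymm (HahnSeries.order_le_of_coeff_ne_zero hcoeff) ?_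
  rw [HahnSeries.le_order_iff_forall (HahnSeries.ne_zero_of_coeff_ne_zero hcoeff)]
  intro j hj
  rw [coeff_coe]
  split_ifs with hj0
  · rfl
  · exact hlt _ (by omega)

end LaurentSeries

theorem toL_apply {k : Type} [Field k] (x : k⟦X⟧) : toL x = (x : k⸨X⸩) := rfl

theorem ordGE_coe_mul_inv_mul {k : Type} [Field k] {a b h : k⟦X⟧} {m n : ℕ}
    (ha : a.order = m) (hb : b.order = n) :
    ordGE ((a : k⸨X⸩) * (b : k⸨X⸩)⁻¹ * (h : k⸨X⸩)) (m - n) := by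
  set α : k⸨X⸩ := a * (b : k⸨X⸩)⁻¹ * h
  rcases eq_or_ne α 0 with hα | hα
  · exact Or.inl hα
  right
  have ha0 : (a : k⸨X⸩) ≠ 0 := LaurentSeries.coe_ne_zero (by rintro rfl; simp at ha)
  have hb0 : (b : k⸨X⸩) ≠ 0 := LaurentSeries.coe_ne_zero (by rintro rfl; simp at hb)
  have hh0 : (h : k⸨X⸩) ≠ 0 := by rintro h0; simp [α, h0] at hα
  have hαb : α * b = a * h := by
    simp only [α]
    field_simp
  have := congrArg HahnSeries.order hαb
  rw [HahnSeries.order_mul hα hb0, HahnSeries.order_mul ha0 hh0,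
    LaurentSeries.order_coe_of_order_eq ha, LaurentSeries.order_coe_of_order_eq hb] at this
  linarith [LaurentSeries.order_coe_nonneg h]

section LocalAction

variable {k : Type} [Field k] {G : Type} [Group G] (ρ : G →* (k⟦X⟧ ≃ₐ[k] k⟦X⟧))

theorem apply_apply_eq_mul_apply (a b : G) (x : k⟦X⟧) : ρ a (ρ b x) = ρ (a * b) x := by
  rw [map_mul, AlgEquiv.mul_apply]

theorem apply_ne_zero (g : G) {x : k⟦X⟧} (hx : x ≠ 0) : ρ g x ≠ 0 :=
  (map_ne_zero_iff _ (ρ g).injective).mpr hx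

variable (N : Subgroup G)

theorem apply_cocycle_apply_X {c : G → Derivation k k⟦X⟧ k⟦X⟧}
    (hc : ∀ g : G, ∀ s ∈ N, ∀ x, c (g * s) x = c g x + ρ g (c s (ρ g⁻¹ x))) (g : G) {s : G}
    (hs : s ∈ N) : ρ g (c s (ρ s X)) = c (g * s) (ρ (g * s) X) - c g (ρ (g * s) X) := by
  rw [hc g s hs, apply_apply_eq_mul_apply, inv_mul_cancel_left]
  ring

variable [Fintype G]

theorem apply_prod_apply_X (g : G) : ρ g (∏ h : G, ρ h X) = ∏ h : G, ρ h X := by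
  rw [map_prod]
  simp_rw [apply_apply_eq_mul_apply]
  exact Fintype.prod_equiv (Equiv.mulLeft g) _ _ fun _ => rfl

variable [DecidablePred (· ∈ N)]

theorem Subgroup.prod_filter_mem_mul_left {M : Type*} [CommMonoid M] {s : G} (hs : s ∈ N)
    (f : G → M) :
    ∏ t ∈ Finset.univ.filter (· ∈ N), f (s * t) = ∏ t ∈ Finset.univ.filter (· ∈ N), f t :=
  Finset.prod_equiv (Equiv.mulLeft s) (by simp [N.mul_mem_cancel_left hs]) fun _ _ => rfl

theorem Subgroup.sum_filter_mem_mul_left {M : Type*} [AddCommMonoid M] {s : G} (hs : s ∈ N)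
    (f : G → M) :
    ∑ t ∈ Finset.univ.filter (· ∈ N), f (s * t) = ∑ t ∈ Finset.univ.filter (· ∈ N), f t :=
  Finset.sum_equiv (Equiv.mulLeft s) (by simp [N.mul_mem_cancel_left hs]) fun _ _ => rfl

theorem apply_prod_filter_mem_apply_X (g : G) :
    ρ g (∏ s ∈ Finset.univ.filter (· ∈ N), ρ s X) =
      ∏ s ∈ Finset.univ.filter (· ∈ N), ρ (g * s) X := by
  rw [map_prod]
  simp_rw [apply_apply_eq_mul_apply]

theorem rhoL_apply_sub_alpha (ρL : G →* (k⸨X⸩ ≃ₐ[k] k⸨X⸩))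
    (hρL : ∀ g (x : k⟦X⟧), ρL g x = (ρ g x : k⸨X⸩)) {c : G → Derivation k k⟦X⟧ k⟦X⟧}
    (hc : ∀ g : G, ∀ s ∈ N, ∀ x, c (g * s) x = c g x + ρ g (c s (ρ g⁻¹ x)))
    {yN yG : k⟦X⟧} (hyN : yN = ∏ s ∈ Finset.univ.filter (· ∈ N), ρ s X)
    (hyG : yG = ∏ g : G, ρ g X) (hyN' : d⁄dX k yN ≠ 0) {α : k⸨X⸩}
    (hα : α = -((yN : k⸨X⸩) * ((d⁄dX k yG : k⸨X⸩) * (d⁄dX k yN : k⸨X⸩)⁻¹) *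
      ∑ s ∈ Finset.univ.filter (· ∈ N), (c s (ρ s X) : k⸨X⸩) * (ρ s X : k⸨X⸩)⁻¹)) (g : G) :
    ρL g α - α =
      (c g yG : k⸨X⸩) - (ρ g yN : k⸨X⸩) *
        ((d⁄dX k yG : k⸨X⸩) * (d⁄dX k yN : k⸨X⸩)⁻¹) *
        ((d⁄dX k yN : k⸨X⸩) * (d⁄dX k (ρ g yN) : k⸨X⸩)⁻¹) *
        ∑ s ∈ Finset.univ.filter (· ∈ N),
          (c (g * s) (ρ (g * s) X) : k⸨X⸩) * (ρ (g * s) X : k⸨X⸩)⁻¹ +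
      (yN : k⸨X⸩) * ((d⁄dX k yG : k⸨X⸩) * (d⁄dX k yN : k⸨X⸩)⁻¹) *
        ∑ s ∈ Finset.univ.filter (· ∈ N), (c s (ρ s X) : k⸨X⸩) * (ρ s X : k⸨X⸩)⁻¹ := by
  subst hα
  have hf : ∀ h : G, ((ρ h X : k⟦X⟧) : k⸨X⸩) ≠ 0 :=
    fun h => LaurentSeries.coe_ne_zero (apply_ne_zero ρ h X_ne_zero)
  have hw : ((d⁄dX k (ρ g X) : k⟦X⟧) : k⸨X⸩) ≠ 0 :=
    LaurentSeries.coe_ne_zero (isUnit_derivative_algEquiv_X (ρ g)).ne_zero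
  have hgyN : ((ρ g yN : k⟦X⟧) : k⸨X⸩) ≠ 0 := by
    rw [hyN, map_prod, map_prod]
    exact Finset.prod_ne_zero_iff.mpr fun s _ => by simpa using hf (g * s)
  have hgyN' : ((ρ g (d⁄dX k yN) : k⟦X⟧) : k⸨X⸩) ≠ 0 :=
    LaurentSeries.coe_ne_zero (apply_ne_zero ρ g hyN')
  have hyG' :
      (ρ g (d⁄dX k yG) : k⸨X⸩) = (d⁄dX k yG : k⸨X⸩) * (d⁄dX k (ρ g X) : k⸨X⸩)⁻¹ := by
    have := derivative_algEquiv_apply (ρ g) yG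
    rw [hyG, apply_prod_apply_X, ← hyG] at this
    rw [eq_mul_inv_iff_mul_eq₀ hw, ← map_mul, ← this]
  have hcoc : ∑ s ∈ Finset.univ.filter (· ∈ N),
        (ρ g (c s (ρ s X)) : k⸨X⸩) * (ρ g (ρ s X) : k⸨X⸩)⁻¹ =
      ∑ s ∈ Finset.univ.filter (· ∈ N),
        (c (g * s) (ρ (g * s) X) : k⸨X⸩) * (ρ (g * s) X : k⸨X⸩)⁻¹ -
      (d⁄dX k (ρ g yN) : k⸨X⸩) * (c g X : k⸨X⸩) * (ρ g yN : k⸨X⸩)⁻¹ := by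
    have hlog : ∑ s ∈ Finset.univ.filter (· ∈ N),
          (c g (ρ (g * s) X) : k⸨X⸩) * (ρ (g * s) X : k⸨X⸩)⁻¹ =
        (d⁄dX k (ρ g yN) : k⸨X⸩) * (c g X : k⸨X⸩) * (ρ g yN : k⸨X⸩)⁻¹ := by
      rw [Derivation.sum_map_mul_inv_eq _ (c g) _ _ fun s _ => hf (g * s),
        ← apply_prod_filter_mem_apply_X, ← hyN, derivation_apply_eq_derivative_mul (c g),
        map_mul]
    rw [← hlog, ← Finset.sum_sub_distrib]
    refine Finset.sum_congr rfl fun s hs => ?_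
    rw [apply_cocycle_apply_X ρ N hc g (Finset.mem_filter.mp hs).2, apply_apply_eq_mul_apply,
      map_sub, sub_mul]
  simp only [map_neg, map_mul (ρL g), map_inv₀, map_sum, hρL]
  rw [hcoc, derivation_apply_eq_derivative_mul (c g) yG, hyG',
    derivative_algEquiv_apply (ρ g) yN]
  have hyN'L := LaurentSeries.coe_ne_zero hyN'
  push_cast
  field_simp
  ring

theorem statement12_general
    (k : Type) [Field k]
    (G : Type) [Group G] [Fintype G]
    (ρ : G →* (PowerSeries k ≃ₐ[k] PowerSeries k))
    (ρL : G →* (LaurentSeries k ≃ₐ[k] LaurentSeries k))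
    (hρL : ∀ g x, ρL g (toL x) = toL (ρ g x))
    (N : Subgroup G) [DecidablePred (· ∈ N)]
    (yN yG : PowerSeries k)
    (hyN : yN = ∏ s ∈ Finset.univ.filter (· ∈ N), ρ s PowerSeries.X)
    (hyG : yG = ∏ g : G, ρ g PowerSeries.X)
    (dG dN : ℕ)
    (hdG : (PowerSeries.derivative k yG).order = (dG : ℕ∞))
    (hdN : (PowerSeries.derivative k yN).order = (dN : ℕ∞))
    (c : G → Derivation k (PowerSeries k) (PowerSeries k))
    (hc : ∀ g : G, ∀ s ∈ N, ∀ x, c (g * s) x = c g x + ρ g (c s (ρ g⁻¹ x)))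
    (α : LaurentSeries k)
    (hα : α = -(toL yN *
      (toL (PowerSeries.derivative k yG) * (toL (PowerSeries.derivative k yN))⁻¹) *
      ∑ s ∈ Finset.univ.filter (· ∈ N),
        toL (c s (ρ s PowerSeries.X)) * (toL (ρ s PowerSeries.X))⁻¹)) :
    -- (i)
    (∀ g : G, ρL g α - α =
      toL (c g yG) -
        toL (ρ g yN) *
          (toL (PowerSeries.derivative k yG) * (toL (PowerSeries.derivative k yN))⁻¹) *
          (toL (PowerSeries.derivative k yN) *
            (toL (PowerSeries.derivative k (ρ g yN)))⁻¹) *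
          ∑ s ∈ Finset.univ.filter (· ∈ N),
            toL (c (g * s) (ρ (g * s) PowerSeries.X)) * (toL (ρ (g * s) PowerSeries.X))⁻¹ +
        toL yN *
          (toL (PowerSeries.derivative k yG) * (toL (PowerSeries.derivative k yN))⁻¹) *
          ∑ s ∈ Finset.univ.filter (· ∈ N),
            toL (c s (ρ s PowerSeries.X)) * (toL (ρ s PowerSeries.X))⁻¹) ∧
    (∀ s ∈ N, ρL s α - α = toL (c s yG)) ∧
    -- (ii)
    ordGE α ((dG : ℤ) - (dN : ℤ)) ∧
    (∃ h : PowerSeries k,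
      α = toL (PowerSeries.derivative k yG) * (toL (PowerSeries.derivative k yN))⁻¹ *
        toL h) := by
  simp only [toL_apply] at hρL hα ⊢
  have hyN' : d⁄dX k yN ≠ 0 := by
    rintro h
    simp [h] at hdN
  have part_i := rhoL_apply_sub_alpha ρ N ρL hρL hc hyN hyG hyN' hα
  refine ⟨part_i, fun s hs => ?_, ?_⟩
  · have hsyN : ρ s yN = yN := by
      rw [hyN, apply_prod_filter_mem_apply_X, N.prod_filter_mem_mul_left hs fun t => ρ t X]
    rw [part_i s, hsyN,
      N.sum_filter_mem_mul_left hs fun t => (c t (ρ t X) : k⸨X⸩) * (ρ t X : k⸨X⸩)⁻¹,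
      mul_inv_cancel₀ (LaurentSeries.coe_ne_zero hyN')]
    ring
  · classical
    set F := Finset.univ.filter (· ∈ N)
    have hsum := RingHom.map_prod_mul_sum_mul_inv (HahnSeries.ofPowerSeries ℤ k) F
      (fun s => ρ s X) (fun s => c s (ρ s X))
      fun s _ => LaurentSeries.coe_ne_zero (apply_ne_zero ρ s X_ne_zero)
    have hαh : α = (d⁄dX k yG : k⸨X⸩) * (d⁄dX k yN : k⸨X⸩)⁻¹ *
        ((-∑ s ∈ F, c s (ρ s X) * ∏ t ∈ F.erase s, ρ t X : k⟦X⟧) : k⸨X⸩) := by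
      rw [hα, map_neg, ← hsum, ← hyN]
      ring
    exact ⟨hαh ▸ ordGE_coe_mul_inv_mul hdG hdN, _, hαh⟩

/-- Let `N ⊴ G` and let `c : G → Der` satisfy `c_{gs} = c_g + g·c_s`
for `g ∈ G`, `s ∈ N`.  Set `α = −y_N·(y_G'/y_N')·Σ_{s∈N} c_s(f_s)/f_s`.  Then
(i) `ρ(g)(α) − α = c_g(y_G) − ρ(g)(y_N)·(y_G'/y_N')·(y_N'/(ρ(g)(y_N))')·Σ_{s∈N}
c_{gs}(f_{gs})/f_{gs} + y_N·(y_G'/y_N')·Σ_{s∈N} c_s(f_s)/f_s`, in particular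
`ρ(s)(α) − α = c_s(y_G)` for `s ∈ N`; (ii) `ord(α) ≥ ord(y_G') − ord(y_N')`, i.e.
`α ∈ (y_G'/y_N')·k[[t]]`. -/
theorem statement12
    (p : ℕ) [Fact p.Prime]
    (k : Type) [Field k] [CharP k p] [PerfectField k]
    (G : Type) [Group G] [Fintype G]
    (ρ : G →* (PowerSeries k ≃ₐ[k] PowerSeries k)) (hρ : Function.Injective ρ)
    (ρL : G →* (LaurentSeries k ≃ₐ[k] LaurentSeries k))
    (hρL : ∀ g x, ρL g (toL x) = toL (ρ g x))
    (N : Subgroup G) (hN : N.Normal) [DecidablePred (· ∈ N)]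
    (yN yG : PowerSeries k)
    (hyN : yN = ∏ s ∈ Finset.univ.filter (· ∈ N), ρ s PowerSeries.X)
    (hyG : yG = ∏ g : G, ρ g PowerSeries.X)
    (dG dN : ℕ)
    (hdG : (PowerSeries.derivative k yG).order = (dG : ℕ∞))
    (hdN : (PowerSeries.derivative k yN).order = (dN : ℕ∞))
    (c : G → Derivation k (PowerSeries k) (PowerSeries k))
    (hc : ∀ g : G, ∀ s ∈ N, ∀ x, c (g * s) x = c g x + ρ g (c s (ρ g⁻¹ x)))
    (α : LaurentSeries k)
    (hα : α = -(toL yN *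
      (toL (PowerSeries.derivative k yG) * (toL (PowerSeries.derivative k yN))⁻¹) *
      ∑ s ∈ Finset.univ.filter (· ∈ N),
        toL (c s (ρ s PowerSeries.X)) * (toL (ρ s PowerSeries.X))⁻¹)) :
    -- (i)
    (∀ g : G, ρL g α - α =
      toL (c g yG) -
        toL (ρ g yN) *
          (toL (PowerSeries.derivative k yG) * (toL (PowerSeries.derivative k yN))⁻¹) *
          (toL (PowerSeries.derivative k yN) *
            (toL (PowerSeries.derivative k (ρ g yN)))⁻¹) *
          ∑ s ∈ Finset.univ.filter (· ∈ N),
            toL (c (g * s) (ρ (g * s) PowerSeries.X)) * (toL (ρ (g * s) PowerSeries.X))⁻¹ +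
        toL yN *
          (toL (PowerSeries.derivative k yG) * (toL (PowerSeries.derivative k yN))⁻¹) *
          ∑ s ∈ Finset.univ.filter (· ∈ N),
            toL (c s (ρ s PowerSeries.X)) * (toL (ρ s PowerSeries.X))⁻¹) ∧
    (∀ s ∈ N, ρL s α - α = toL (c s yG)) ∧
    -- (ii)
    ordGE α ((dG : ℤ) - (dN : ℤ)) ∧
    (∃ h : PowerSeries k,
      α = toL (PowerSeries.derivative k yG) * (toL (PowerSeries.derivative k yN))⁻¹ *
        toL h) :=
  statement12_general k G ρ ρL hρL N yN yG hyN hyG dG dN hdG hdN c hc α hα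
end LocalAction
end

section
/- Let G be a group, N a normal subgroup, and M a G-module (abelian group with G-action written g·m). Let η : G×G → M be a 2-cocycle (g·η(h,k) − η(gh,k) + η(g,hk) − η(g,h) = 0 for all g,h,k ∈ G) whose restriction to N×N is a coboundary: there is f : N → M with η(s,t) = s·f(t) − f(st) + f(s) for all s,t ∈ N. For g ∈ G define ξ_g : N → M by ξ_g(s) = η(s,g) − η(g, g^{-1}sg) + g·f(g^{-1}sg) − f(s). Then: (i) for each g ∈ G, ξ_g is a 1-cocycle on N, i.e. ξ_g(st) = ξ_g(s) + s·ξ_g(t); (ii) for g ∈ G and n ∈ N, ξ_{gn} − ξ_g is a coboundary on N, so the class [ξ_g] ∈ H^1(N,M) depends only on the coset gN; (iii) for g, h ∈ G the cocycle ξ_{gh} − ξ_g − g⋆ξ_h is a coboundary on N, where (g⋆c)(s) := g·c(g^{-1}sg); hence gN ↦ [ξ_g] is a 1-cocycle of G/N with values in H^1(N,M) equipped with the standard G/N-action. -/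
/-!
The `f`-terms of `ξ_{gh} - ξ_g - g⋆ξ_h` cancel, so (iii) is an identity about the
2-cocycle `η` alone, valid on all of `G`: three instances of the cocycle relation show it is the
coboundary of `-η(g,h)`. For `n ∈ N` the trivialisation `f` gives `ξ_n(s) = s·f(n) - f(n)`,
so (ii) follows from (iii) applied to `g` and `n`. Part (i) is the cocycle relation for `η` on
`(s,t,g)`, `(s,g,g⁻¹tg)`, `(g,g⁻¹sg,g⁻¹tg)` combined with `δf = η` on `N` at `(s,t)` and at
the conjugate pair `(g⁻¹sg, g⁻¹tg)`, which lies in `N` by normality.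
-/

open groupCohomology

theorem smul_conj_smul {G M : Type*} [Group G] [MulAction G M] (g s : G) (m : M) :
    g • (g⁻¹ * s * g) • m = s • g • m := by
  simp only [smul_smul, mul_assoc, mul_inv_cancel_left]

section ConjCocycle

variable {G M : Type*} [Group G] [AddCommGroup M]

def conjCocycle [SMul G M] (η : G → G → M) (f : G → M) (g s : G) : M :=
  η s g - η g (g⁻¹ * s * g) + g • f (g⁻¹ * s * g) - f s

variable {η : G → G → M} {f : G → M}

theorem conjCocycle_of_mem [SMul G M] {N : Subgroup G}
    (hf : ∀ s ∈ N, ∀ t ∈ N, η s t = s • f t - f (s * t) + f s)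
    {n s : G} (hn : n ∈ N) (hs : s ∈ N) :
    conjCocycle η f n s = s • f n - f n := by
  have hconj : n⁻¹ * s * n ∈ N := N.mul_mem (N.mul_mem (N.inv_mem hn) hs) hn
  have hA := hf s hs n hn
  have hB := hf n hn _ hconj
  rw [show n * (n⁻¹ * s * n) = s * n by group] at hB
  rw [conjCocycle, hA, hB]
  abel

section DistribMulAction

variable [DistribMulAction G M]

theorem conjCocycle_mul_sub_smul (hη : IsCocycle₂ (Function.uncurry η)) (g h s : G) :
    conjCocycle η f (g * h) s - conjCocycle η f g s - g • conjCocycle η f h (g⁻¹ * s * g) =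
      s • (-η g h) - -η g h := by
  have hconj : (g * h)⁻¹ * s * (g * h) = h⁻¹ * (g⁻¹ * s * g) * h := by group
  rw [conjCocycle, conjCocycle, conjCocycle, hconj]
  set x := g⁻¹ * s * g
  set y := h⁻¹ * x * h
  have hA : η (s * g) h + η s g = s • η g h + η s (g * h) := hη s g h
  have hB : η (s * g) h + η g x = g • η x h + η g (x * h) := by
    rw [show s * g = g * x by simp only [x]; group]; exact hη g x h
  have hC : η (g * h) y + η g h = g • η h y + η g (x * h) := by
    rw [show x * h = h * y by simp only [x, y]; group]; exact hη g h y
  simp only [mul_smul, smul_sub, smul_add, smul_neg]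
  linear_combination (norm := abel1) -hA + hB - hC

theorem conjCocycle_mul_of_mem {N : Subgroup G} (hN : N.Normal)
    (hη : IsCocycle₂ (Function.uncurry η))
    (hf : ∀ s ∈ N, ∀ t ∈ N, η s t = s • f t - f (s * t) + f s)
    (g : G) {s t : G} (hs : s ∈ N) (ht : t ∈ N) :
    conjCocycle η f g (s * t) = conjCocycle η f g s + s • conjCocycle η f g t := by
  have hconj : g⁻¹ * (s * t) * g = (g⁻¹ * s * g) * (g⁻¹ * t * g) := by group
  rw [conjCocycle, conjCocycle, conjCocycle, hconj]
  have hx := hN.conj_mem' s hs g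
  have hy := hN.conj_mem' t ht g
  set x := g⁻¹ * s * g
  set y := g⁻¹ * t * g
  have hA : η (s * t) g + η s t = s • η t g + η s (t * g) := hη s t g
  have hB : η (s * g) y + η s g = s • η g y + η s (t * g) := by
    rw [show t * g = g * y by simp only [y]; group]; exact hη s g y
  have hC : η (s * g) y + η g x = g • η x y + η g (x * y) := by
    rw [show s * g = g * x by simp only [x]; group]; exact hη g x y
  have hD : g • η x y = s • g • f y - g • f (x * y) + g • f x := by
    rw [hf x hx y hy, smul_add, smul_sub, smul_conj_smul]
  have hE := hf s hs t ht
  simp only [smul_sub, smul_add]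
  linear_combination (norm := abel1) hA - hB + hC + hD - hE

theorem conjCocycle_mul_right_sub_of_mem {N : Subgroup G} (hN : N.Normal)
    (hη : IsCocycle₂ (Function.uncurry η))
    (hf : ∀ s ∈ N, ∀ t ∈ N, η s t = s • f t - f (s * t) + f s)
    (g : G) {n s : G} (hn : n ∈ N) (hs : s ∈ N) :
    conjCocycle η f (g * n) s - conjCocycle η f g s =
      s • (g • f n - η g n) - (g • f n - η g n) := by
  have hcob := conjCocycle_mul_sub_smul (f := f) hη g n s
  rw [conjCocycle_of_mem hf hn (hN.conj_mem' s hs g), smul_sub, smul_conj_smul,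
    smul_neg] at hcob
  rw [smul_sub]
  linear_combination (norm := abel1) hcob

end DistribMulAction

end ConjCocycle

/-- Let `N ⊴ G` and `M` a `G`-module.  Let `η` be a `2`-cocycle on
`G` whose restriction to `N × N` is the coboundary of `f : N → M`, and for `g ∈ G` let
`ξ_g(s) = η(s,g) − η(g, g⁻¹sg) + g·f(g⁻¹sg) − f(s)`.  Then (i) each `ξ_g` is a
`1`-cocycle on `N`; (ii) the class `[ξ_g] ∈ H¹(N,M)` depends only on the coset `gN`;
(iii) `gN ↦ [ξ_g]` is a `1`-cocycle of `G/N` with values in `H¹(N,M)` for the standard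
`G/N`-action `(g⋆c)(s) = g·c(g⁻¹sg)`. -/
theorem statement16
    (G : Type) [Group G] (N : Subgroup G) (hN : N.Normal)
    (M : Type) [AddCommGroup M] [DistribMulAction G M]
    (η : G → G → M)
    (hη : ∀ g h l : G, g • η h l - η (g * h) l + η g (h * l) - η g h = 0)
    (f : G → M)
    (hf : ∀ s ∈ N, ∀ t ∈ N, η s t = s • f t - f (s * t) + f s)
    (ξ : G → G → M)
    (hξ : ∀ g s : G, ξ g s = η s g - η g (g⁻¹ * s * g) + g • f (g⁻¹ * s * g) - f s) :
    -- (i) each `ξ_g` is a 1-cocycle on `N`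
    (∀ g : G, ∀ s ∈ N, ∀ t ∈ N, ξ g (s * t) = ξ g s + s • ξ g t) ∧
    -- (ii) the class of `ξ_g` depends only on the coset `gN`
    (∀ g : G, ∀ n ∈ N, ∃ m : M, ∀ s ∈ N, ξ (g * n) s - ξ g s = s • m - m) ∧
    -- (iii) `gN ↦ [ξ_g]` is a 1-cocycle of `G/N` with values in `H¹(N, M)`
    (∀ g h : G, ∃ m : M, ∀ s ∈ N,
      ξ (g * h) s - ξ g s - g • ξ h (g⁻¹ * s * g) = s • m - m) := by
  obtain rfl : ξ = conjCocycle η f := funext₂ hξ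
  have hη₂ : IsCocycle₂ (Function.uncurry η) := fun g h l => by
    show η (g * h) l + η g h = g • η h l + η g (h * l)
    linear_combination (norm := abel1) -hη g h l
  exact ⟨fun g s hs t ht => conjCocycle_mul_of_mem hN hη₂ hf g hs ht,
    fun g n hn => ⟨_, fun s hs => conjCocycle_mul_right_sub_of_mem hN hη₂ hf g hn hs⟩,
    fun g h => ⟨_, fun s _ => conjCocycle_mul_sub_smul hη₂ g h s⟩⟩
end
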